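/- arXiv:2211.13044 — 7 statements merged into one kernel-verified Lean document; each statement's English description precedes it below -/
import Mathlib

section
/- Let C ≥ 1 and let n, p ≥ 1 be integers. Let X be a random p×n real matrix that is E₂(1)-concentrated with constant C. Set t_n = (C·((n+p)·log 9 + 2·log n))^{1/2}. Then P(‖X − E[X]‖_op ≥ 3·t_n) ≤ C/n², where E[X] is the entrywise expectation of X and ‖·‖_op is the operator (spectral) norm on p×n matrices. -/
open MeasureTheory Matrix

/-- The Frobenius norm of a matrix. -/
noncomputable def frobNorm {𝕜 : Type*} [RCLike 𝕜] {m n : ℕ} (M : Matrix (Fin m) (Fin n) 𝕜) : ℝ :=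
  Real.sqrt (∑ i, ∑ j, ‖M i j‖ ^ 2)

/-- The operator (spectral) norm of a matrix, i.e. the norm of the associated linear map
between Euclidean spaces. -/
noncomputable def opNorm {𝕜 : Type*} [RCLike 𝕜] {m n : ℕ} (M : Matrix (Fin m) (Fin n) 𝕜) : ℝ :=
  ‖LinearMap.toContinuousLinearMap (Matrix.toEuclideanLin M)‖

section aux
open Metric

lemma sep_card_le (k : ℕ) (hk : 1 ≤ k) (S : Finset (EuclideanSpace ℝ (Fin k)))
    (hS1 : ∀ u ∈ S, ‖u‖ ≤ 1)
    (hsep : ∀ u ∈ S, ∀ v ∈ S, u ≠ v → 1/3 ≤ dist u v) : S.card ≤ 9 ^ k := by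
  haveI : Nontrivial (EuclideanSpace ℝ (Fin k)) := by
    refine ⟨0, EuclideanSpace.single ⟨0, hk⟩ 1, fun h => ?_⟩
    have := congrArg (fun f : EuclideanSpace ℝ (Fin k) => f ⟨0, hk⟩) h.symm
    simp [EuclideanSpace.single] at this
  set ν : Measure (EuclideanSpace ℝ (Fin k)) := volume
  have hdisj : (S : Set (EuclideanSpace ℝ (Fin k))).PairwiseDisjoint
      (fun u => ball u (1/6)) := by
    intro u hu v hv huv
    refine Set.disjoint_left.2 fun y hyu hyv => ?_
    have h1 : dist u v ≤ dist u y + dist y v := dist_triangle _ _ _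
    have h2 : dist u v < 1/3 := by
      have hu' : dist y u < 1/6 := mem_ball.1 hyu
      have hv' : dist y v < 1/6 := mem_ball.1 hyv
      have := dist_comm y u
      linarith
    exact absurd (hsep u hu v hv huv) (not_le.2 h2)
  have hsub : ⋃ u ∈ S, ball u (1/6) ⊆ ball (0 : EuclideanSpace ℝ (Fin k)) (7/6) := by
    intro y hy
    simp only [Set.mem_iUnion] at hy
    obtain ⟨u, hu, hyu⟩ := hy
    have : dist y u < 1/6 := mem_ball.1 hyu
    have h0 : dist u 0 ≤ 1 := by simpa [dist_eq_norm] using hS1 u hu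
    have : dist y 0 < 7/6 := by
      calc dist y 0 ≤ dist y u + dist u 0 := dist_triangle _ _ _
        _ < 7/6 := by linarith
    exact mem_ball.2 this
  have hsum : ∑ u ∈ S, ν (ball u (1/6)) ≤ ν (ball 0 (7/6)) := by
    rw [← measure_biUnion_finset hdisj (fun u _ => measurableSet_ball)]
    exact measure_mono hsub
  have hball : ∀ x : EuclideanSpace ℝ (Fin k),
      ν (ball x (1/6)) = ENNReal.ofReal ((1/6 : ℝ) ^ k) * ν (ball 0 1) := by
    intro x
    rw [Measure.addHaar_ball ν x (by norm_num : (0:ℝ) ≤ 1/6)]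
    simp [finrank_euclideanSpace]
  have hball7 : ν (ball 0 (7/6)) = ENNReal.ofReal ((7/6 : ℝ) ^ k) * ν (ball 0 1) := by
    rw [Measure.addHaar_ball ν 0 (by norm_num : (0:ℝ) ≤ 7/6)]
    simp [finrank_euclideanSpace]
  rw [Finset.sum_congr rfl (fun u _ => hball u), Finset.sum_const, hball7] at hsum
  have hpos : 0 < ν (ball 0 1) := measure_ball_pos ν 0 one_pos
  have hfin : ν (ball 0 1) < ⊤ := measure_ball_lt_top
  rw [nsmul_eq_mul, ← mul_assoc] at hsum
  have hcard : (S.card : ENNReal) * ENNReal.ofReal ((1/6 : ℝ) ^ k) ≤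
      ENNReal.ofReal ((7/6 : ℝ) ^ k) :=
    (ENNReal.mul_le_mul_iff_left hpos.ne' hfin.ne).1 hsum
  have h16 : (0:ℝ) ≤ (1/6 : ℝ) ^ k := by positivity
  rw [← ENNReal.ofReal_natCast, ← ENNReal.ofReal_mul (by positivity)] at hcard
  have hreal : (S.card : ℝ) * (1/6 : ℝ) ^ k ≤ (7/6 : ℝ) ^ k :=
    (ENNReal.ofReal_le_ofReal_iff (by positivity)).1 hcard
  have h7 : (S.card : ℝ) ≤ 7 ^ k := by
    have h76 : (7/6 : ℝ) ^ k = 7 ^ k * (1/6 : ℝ) ^ k := by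
      rw [← mul_pow]; norm_num
    rw [h76] at hreal
    have := (mul_le_mul_iff_of_pos_right (by positivity : (0:ℝ) < (1/6:ℝ)^k)).1 hreal
    exact this
  have : (S.card : ℝ) ≤ 9 ^ k := h7.trans (by
    apply pow_le_pow_left₀ <;> norm_num)
  exact_mod_cast this

lemma exists_net (k : ℕ) (hk : 1 ≤ k) :
    ∃ S : Finset (EuclideanSpace ℝ (Fin k)), S.card ≤ 9 ^ k ∧ (∀ u ∈ S, ‖u‖ ≤ 1) ∧
      ∀ x : EuclideanSpace ℝ (Fin k), ‖x‖ ≤ 1 → ∃ u ∈ S, ‖x - u‖ ≤ 1/3 := by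
  classical
  set P : Finset (EuclideanSpace ℝ (Fin k)) → Prop := fun S =>
    (∀ u ∈ S, ‖u‖ ≤ 1) ∧ ∀ u ∈ S, ∀ v ∈ S, u ≠ v → 1/3 ≤ dist u v with hP
  set T : Set ℕ := {m | ∃ S, P S ∧ S.card = m} with hT
  have hbdd : BddAbove T := by
    refine ⟨9 ^ k, fun m hm => ?_⟩
    obtain ⟨S, ⟨h1, h2⟩, rfl⟩ := hm
    exact sep_card_le k hk S h1 h2
  have hne : T.Nonempty := ⟨0, ∅, ⟨by simp, by simp⟩, rfl⟩
  obtain ⟨S, hPS, hScard⟩ : ∃ S, P S ∧ S.card = sSup T := Nat.sSup_mem hne hbdd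
  refine ⟨S, ?_, hPS.1, ?_⟩
  · rw [hScard]
    exact csSup_le hne (fun m hm => by
      obtain ⟨S', ⟨h1, h2⟩, rfl⟩ := hm; exact sep_card_le k hk S' h1 h2)
  · intro x hx
    by_contra hno
    push_neg at hno
    have hxS : x ∉ S := fun hxS => by
      have := hno x hxS
      simp only [sub_self, norm_zero] at this
      linarith
    have hP' : P (insert x S) := by
      constructor
      · intro u hu
        rcases Finset.mem_insert.1 hu with rfl | hu
        · exact hx
        · exact hPS.1 u hu
      · intro u hu v hv huv
        rcases Finset.mem_insert.1 hu with hux | hu' <;>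
          rcases Finset.mem_insert.1 hv with hvx | hv'
        · exact absurd (hux.trans hvx.symm) huv
        · subst hux
          exact le_of_lt (by simpa [dist_eq_norm] using hno v hv')
        · subst hvx
          rw [dist_comm]
          exact le_of_lt (by simpa [dist_eq_norm] using hno u hu')
        · exact hPS.2 u hu' v hv' huv
    have : (insert x S).card ∈ T := ⟨insert x S, hP', rfl⟩
    have hle := le_csSup hbdd this
    rw [Finset.card_insert_of_notMem hxS, hScard] at hle
    omega

end aux

set_option maxHeartbeats 1000000 in
lemma net_bound {p n : ℕ} (M : Matrix (Fin p) (Fin n) ℝ)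
    (Su : Finset (EuclideanSpace ℝ (Fin p))) (Sv : Finset (EuclideanSpace ℝ (Fin n)))
    (netu : ∀ x : EuclideanSpace ℝ (Fin p), ‖x‖ ≤ 1 → ∃ u ∈ Su, ‖x - u‖ ≤ 1/3)
    (netv : ∀ x : EuclideanSpace ℝ (Fin n), ‖x‖ ≤ 1 → ∃ v ∈ Sv, ‖x - v‖ ≤ 1/3)
    (t : ℝ) (ht : 0 < t) (hM : 3 * t ≤ opNorm M) :
    ∃ u ∈ Su, ∃ v ∈ Sv, t ≤ |∑ i, ∑ j, (u : Fin p → ℝ) i * M i j * (v : Fin n → ℝ) j| := by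
  set T := LinearMap.toContinuousLinearMap (Matrix.toEuclideanLin M) with hTdef
  have hT : 3 * t ≤ ‖T‖ := hM
  have hTpos : 0 < ‖T‖ := lt_of_lt_of_le (by linarith) hT
  have h56 : (5/6) * ‖T‖ < ‖T‖ := by nlinarith
  obtain ⟨x, hx1, hx2⟩ := T.exists_lt_apply_of_lt_opNorm h56
  obtain ⟨v, hvS, hv⟩ := netv x hx1.le
  have hTv : ‖T‖ / 2 ≤ ‖T v‖ := by
    have h1 : ‖T (x - v)‖ ≤ ‖T‖ * ‖x - v‖ := T.le_opNorm _
    have h2 : ‖T x‖ ≤ ‖T v‖ + ‖T (x - v)‖ := by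
      have : T x = T v + T (x - v) := by rw [map_sub]; abel
      rw [this]; exact norm_add_le _ _
    nlinarith [norm_nonneg (x - v), norm_nonneg (T v)]
  set w := T v with hwdef
  have hw : 0 < ‖w‖ := by
    have : 0 < ‖T‖ / 2 := by linarith
    exact lt_of_lt_of_le this hTv
  set y : EuclideanSpace ℝ (Fin p) := ‖w‖⁻¹ • w with hydef
  have hy : ‖y‖ = 1 := by
    rw [hydef, norm_smul, norm_inv, norm_norm, inv_mul_cancel₀ hw.ne']
  obtain ⟨u, huS, hu⟩ := netu y hy.le
  refine ⟨u, huS, v, hvS, ?_⟩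
  have hinner : t ≤ inner ℝ u w := by
    have h1 : (inner ℝ y w : ℝ) = ‖w‖ := by
      rw [hydef, real_inner_smul_left, real_inner_self_eq_norm_sq]
      rw [pow_two]
      field_simp
    have h2 : |(inner ℝ (y - u) w : ℝ)| ≤ ‖y - u‖ * ‖w‖ := abs_real_inner_le_norm _ _
    have h3 : (inner ℝ u w : ℝ) = inner ℝ y w - inner ℝ (y - u) w := by
      rw [inner_sub_left]; ring
    have h4 : ‖y - u‖ * ‖w‖ ≤ (1/3) * ‖w‖ := by
      apply mul_le_mul_of_nonneg_right hu hw.le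
    have h5 : (inner ℝ u w : ℝ) ≥ (2/3) * ‖w‖ := by
      rw [h3, h1]
      have := abs_le.1 h2
      linarith
    have : (2/3) * ‖w‖ ≥ t := by
      have := hTv
      nlinarith
    linarith
  have hiw : (inner ℝ u w : ℝ) = ∑ i, ∑ j, (u : Fin p → ℝ) i * M i j * (v : Fin n → ℝ) j := by
    rw [hwdef]
    have : T v = Matrix.toEuclideanLin M v := rfl
    rw [this]
    simp only [PiLp.inner_apply, RCLike.inner_apply, conj_trivial, toEuclideanLin_apply,
      mulVec, dotProduct]
    refine Finset.sum_congr rfl fun i _ => ?_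
    rw [Finset.sum_mul]
    exact Finset.sum_congr rfl fun j _ => by ring
  rw [hiw] at hinner
  exact hinner.trans (le_abs_self _)

lemma entry_lip {p n : ℕ} (i : Fin p) (j : Fin n) (A B : Matrix (Fin p) (Fin n) ℝ) :
    |A i j - B i j| ≤ frobNorm (A - B) := by
  have h1 : |A i j - B i j| = Real.sqrt ((A i j - B i j) ^ 2) := (Real.sqrt_sq_eq_abs _).symm
  rw [h1, frobNorm]
  apply Real.sqrt_le_sqrt
  have h2 : (A i j - B i j) ^ 2 ≤ ∑ j', ‖(A - B) i j'‖ ^ 2 := by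
    have : (A i j - B i j) ^ 2 = ‖(A - B) i j‖ ^ 2 := by
      simp [Matrix.sub_apply, Real.norm_eq_abs, sq_abs]
    rw [this]
    exact Finset.single_le_sum (f := fun j' => ‖(A - B) i j'‖ ^ 2) (fun j' _ => by positivity) (Finset.mem_univ j)
  refine h2.trans ?_
  exact Finset.single_le_sum (f := fun i' => ∑ j', ‖(A - B) i' j'‖ ^ 2) (fun i' _ => Finset.sum_nonneg fun j' _ => by positivity) (Finset.mem_univ i)

lemma fuv_lip {p n : ℕ} (u : Fin p → ℝ) (v : Fin n → ℝ)
    (hu : ∑ i, u i ^ 2 ≤ 1) (hv : ∑ j, v j ^ 2 ≤ 1)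
    (A B : Matrix (Fin p) (Fin n) ℝ) :
    |(∑ i, ∑ j, u i * A i j * v j) - ∑ i, ∑ j, u i * B i j * v j| ≤ frobNorm (A - B) := by
  have hdiff : (∑ i, ∑ j, u i * A i j * v j) - ∑ i, ∑ j, u i * B i j * v j
      = ∑ i, ∑ j, u i * (A - B) i j * v j := by
    rw [← Finset.sum_sub_distrib]
    refine Finset.sum_congr rfl fun i _ => ?_
    rw [← Finset.sum_sub_distrib]
    refine Finset.sum_congr rfl fun j _ => ?_
    simp [Matrix.sub_apply]; ring
  rw [hdiff]
  have cs := Finset.sum_mul_sq_le_sq_mul_sq Finset.univ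
    (fun x : Fin p × Fin n => u x.1 * v x.2) (fun x : Fin p × Fin n => (A - B) x.1 x.2)
  have hg : (∑ x : Fin p × Fin n, (u x.1 * v x.2) ^ 2) ≤ 1 := by
    have : (∑ x : Fin p × Fin n, (u x.1 * v x.2) ^ 2)
        = (∑ i, u i ^ 2) * (∑ j, v j ^ 2) := by
      rw [Finset.sum_mul_sum, ← Finset.univ_product_univ, Finset.sum_product]
      exact Finset.sum_congr rfl fun i _ => Finset.sum_congr rfl fun j _ => by ring
    rw [this]
    have h0u : (0:ℝ) ≤ ∑ i, u i ^ 2 := Finset.sum_nonneg fun i _ => by positivity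
    have h0v : (0:ℝ) ≤ ∑ j, v j ^ 2 := Finset.sum_nonneg fun j _ => by positivity
    nlinarith
  have hsum : (∑ i, ∑ j, u i * (A - B) i j * v j)
      = ∑ x : Fin p × Fin n, (u x.1 * v x.2) * (A - B) x.1 x.2 := by
    rw [← Finset.univ_product_univ, Finset.sum_product]
    exact Finset.sum_congr rfl fun i _ => Finset.sum_congr rfl fun j _ => by ring
  rw [hsum]
  have habs : |∑ x : Fin p × Fin n, (u x.1 * v x.2) * (A - B) x.1 x.2|
      = Real.sqrt ((∑ x : Fin p × Fin n, (u x.1 * v x.2) * (A - B) x.1 x.2) ^ 2) :=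
    (Real.sqrt_sq_eq_abs _).symm
  rw [habs, frobNorm]
  apply Real.sqrt_le_sqrt
  have hM : (∑ x : Fin p × Fin n, ((A - B) x.1 x.2) ^ 2)
      = ∑ i, ∑ j, ‖(A - B) i j‖ ^ 2 := by
    rw [← Finset.univ_product_univ, Finset.sum_product]
    simp [Real.norm_eq_abs, sq_abs]
  have h0M : (0:ℝ) ≤ ∑ x : Fin p × Fin n, ((A - B) x.1 x.2) ^ 2 :=
    Finset.sum_nonneg fun x _ => by positivity
  nlinarith

lemma lip_integrable {Ω : Type*} [MeasurableSpace Ω] (μ : Measure Ω) [IsProbabilityMeasure μ]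
    {p n : ℕ} (C : ℝ) (hC : 1 ≤ C) (X : Ω → Matrix (Fin p) (Fin n) ℝ)
    (hconc : ∀ f : Matrix (Fin p) (Fin n) ℝ → ℝ,
      (∀ A B : Matrix (Fin p) (Fin n) ℝ, |f A - f B| ≤ frobNorm (A - B)) →
      ∀ t : ℝ, 0 ≤ t →
        (μ {ω | t ≤ |f (X ω) - ∫ ω', f (X ω') ∂μ|}).toReal ≤ C * Real.exp (-t ^ 2 / C))
    (f : Matrix (Fin p) (Fin n) ℝ → ℝ)
    (hf : ∀ A B : Matrix (Fin p) (Fin n) ℝ, |f A - f B| ≤ frobNorm (A - B)) :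
    Integrable (fun ω => f (X ω)) μ := by
  by_contra hint
  have hC0 : (0:ℝ) < C := lt_of_lt_of_le one_pos hC
  have h0 : ∫ ω, f (X ω) ∂μ = 0 := integral_undef hint
  set g : Matrix (Fin p) (Fin n) ℝ → ℝ := fun A => f A + 4 * C with hgdef
  have hg : ∀ A B : Matrix (Fin p) (Fin n) ℝ, |g A - g B| ≤ frobNorm (A - B) := by
    intro A B
    have : g A - g B = f A - f B := by rw [hgdef]; ring
    rw [this]; exact hf A B
  have hgint : ¬ Integrable (fun ω => g (X ω)) μ := by
    intro h
    apply hint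
    have h2 := h.sub (integrable_const (4 * C))
    have : ((fun ω => g (X ω)) - fun _ => 4 * C) = fun ω => f (X ω) := by
      funext ω; simp [hgdef]
    rwa [this] at h2
  have hg0 : ∫ ω, g (X ω) ∂μ = 0 := integral_undef hgint
  have e1 := hconc f hf (2 * C) (by positivity)
  have e2 := hconc g hg (2 * C) (by positivity)
  rw [h0] at e1
  rw [hg0] at e2
  have hcover : (Set.univ : Set Ω) ⊆
      {ω | 2 * C ≤ |f (X ω) - 0|} ∪ {ω | 2 * C ≤ |g (X ω) - 0|} := by
    intro ω _
    by_cases hcase : 2 * C ≤ |f (X ω) - 0|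
    · exact Or.inl hcase
    · right
      push_neg at hcase
      rw [sub_zero] at hcase
      show 2 * C ≤ |g (X ω) - 0|
      rw [sub_zero, hgdef]
      have h1 := abs_lt.1 hcase
      have : 2 * C ≤ f (X ω) + 4 * C := by linarith
      calc 2 * C ≤ f (X ω) + 4 * C := this
        _ ≤ |f (X ω) + 4 * C| := le_abs_self _
  have huniv : (1:ℝ) ≤ (μ {ω | 2 * C ≤ |f (X ω) - 0|}).toReal
      + (μ {ω | 2 * C ≤ |g (X ω) - 0|}).toReal := by
    have h1 : μ (Set.univ : Set Ω) ≤ μ {ω | 2 * C ≤ |f (X ω) - 0|}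
        + μ {ω | 2 * C ≤ |g (X ω) - 0|} :=
      (measure_mono hcover).trans (measure_union_le _ _)
    have h2 := ENNReal.toReal_mono
      (ENNReal.add_ne_top.2 ⟨measure_ne_top μ _, measure_ne_top μ _⟩) h1
    rwa [measure_univ, ENNReal.toReal_one,
      ENNReal.toReal_add (measure_ne_top μ _) (measure_ne_top μ _)] at h2
  have hbound : (μ {ω | 2 * C ≤ |f (X ω) - 0|}).toReal
      + (μ {ω | 2 * C ≤ |g (X ω) - 0|}).toReal ≤ 2 * (C * Real.exp (-(2*C)^2 / C)) := by
    linarith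
  have hexp : -(2*C)^2/C = -(4*C) := by field_simp; ring
  rw [hexp] at hbound
  have hsmall : 2 * (C * Real.exp (-(4*C))) < 1 := by
    have h1 : Real.exp (-(4*C)) = (Real.exp (4*C))⁻¹ := Real.exp_neg _
    have h2 : 1 + 4*C ≤ Real.exp (4*C) := by
      have := Real.add_one_le_exp (4*C)
      linarith
    have h3 : 0 < Real.exp (4*C) := Real.exp_pos _
    rw [h1]
    have h4 : 2 * (C * (Real.exp (4*C))⁻¹) = (2*C) / Real.exp (4*C) := by
      field_simp
    rw [h4, div_lt_one h3]
    nlinarith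
  linarith

lemma norm_sq_le_one {k : ℕ} (u : EuclideanSpace ℝ (Fin k)) (h : ‖u‖ ≤ 1) :
    ∑ i, u i ^ 2 ≤ 1 := by
  have h1 : ‖u‖ = Real.sqrt (∑ i, ‖u i‖ ^ 2) := EuclideanSpace.norm_eq u
  have h2 : (∑ i, ‖u i‖ ^ 2) = ∑ i, u i ^ 2 := by simp [Real.norm_eq_abs, sq_abs]
  rw [h2] at h1
  have h3 : (0:ℝ) ≤ ∑ i, u i ^ 2 := Finset.sum_nonneg fun i _ => by positivity
  nlinarith [Real.sq_sqrt h3, Real.sqrt_nonneg (∑ i, u i ^ 2)]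

theorem opNorm_concentration
    {Ω : Type*} [MeasurableSpace Ω] (μ : Measure Ω) [IsProbabilityMeasure μ]
    (C : ℝ) (hC : 1 ≤ C) (n p : ℕ) (hn : 1 ≤ n) (hp : 1 ≤ p)
    (X : Ω → Matrix (Fin p) (Fin n) ℝ)
    (hconc : ∀ f : Matrix (Fin p) (Fin n) ℝ → ℝ,
      (∀ A B : Matrix (Fin p) (Fin n) ℝ, |f A - f B| ≤ frobNorm (A - B)) →
      ∀ t : ℝ, 0 ≤ t →
        (μ {ω | t ≤ |f (X ω) - ∫ ω', f (X ω') ∂μ|}).toReal ≤ C * Real.exp (-t ^ 2 / C)) :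
    (μ {ω | 3 * Real.sqrt (C * ((n + p) * Real.log 9 + 2 * Real.log n)) ≤
        opNorm (X ω - Matrix.of fun i j => ∫ ω', X ω' i j ∂μ)}).toReal ≤ C / n ^ 2 := by
  classical
  have hC0 : (0:ℝ) < C := lt_of_lt_of_le one_pos hC
  have hn1 : (1:ℝ) ≤ (n:ℝ) := by exact_mod_cast hn
  have hp1 : (1:ℝ) ≤ (p:ℝ) := by exact_mod_cast hp
  have hlog9 : 0 < Real.log 9 := Real.log_pos (by norm_num)
  have hlogn : 0 ≤ Real.log n := Real.log_nonneg hn1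
  set D : ℝ := (n + p) * Real.log 9 + 2 * Real.log n with hD
  have hDpos : 0 < D := by
    have hnp : (0:ℝ) < (n:ℝ) + (p:ℝ) := by linarith
    rw [hD]
    push_cast
    nlinarith
  set t := Real.sqrt (C * D) with htdef
  have ht : 0 < t := Real.sqrt_pos.2 (by positivity)
  have ht2 : t ^ 2 = C * D := Real.sq_sqrt (by positivity)
  obtain ⟨Su, hSucard, hSu1, hSunet⟩ := exists_net p hp
  obtain ⟨Sv, hSvcard, hSv1, hSvnet⟩ := exists_net n hn
  set M0 : Matrix (Fin p) (Fin n) ℝ := Matrix.of fun i j => ∫ ω', X ω' i j ∂μ with hM0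
  have hXint : ∀ i j, Integrable (fun ω => X ω i j) μ :=
    fun i j => lip_integrable μ C hC X hconc (fun A => A i j) (entry_lip i j)
  set F : EuclideanSpace ℝ (Fin p) × EuclideanSpace ℝ (Fin n) →
      Matrix (Fin p) (Fin n) ℝ → ℝ :=
    fun z A => ∑ i, ∑ j, z.1 i * A i j * z.2 j with hF
  have hFlip : ∀ z ∈ Su ×ˢ Sv, ∀ A B : Matrix (Fin p) (Fin n) ℝ,
      |F z A - F z B| ≤ frobNorm (A - B) := by
    intro z hz A B
    have hz' := Finset.mem_product.1 hz
    exact fuv_lip z.1 z.2 (norm_sq_le_one z.1 (hSu1 z.1 hz'.1))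
      (norm_sq_le_one z.2 (hSv1 z.2 hz'.2)) A B
  have hFint : ∀ z : EuclideanSpace ℝ (Fin p) × EuclideanSpace ℝ (Fin n),
      ∫ ω, F z (X ω) ∂μ = ∑ i, ∑ j, z.1 i * M0 i j * z.2 j := by
    intro z
    rw [hF]
    rw [integral_finset_sum _ (fun i _ => integrable_finset_sum _
      (fun j _ => ((hXint i j).const_mul (z.1 i)).mul_const (z.2 j)))]
    refine Finset.sum_congr rfl fun i _ => ?_
    rw [integral_finset_sum _ (fun j _ => ((hXint i j).const_mul (z.1 i)).mul_const (z.2 j))]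
    refine Finset.sum_congr rfl fun j _ => ?_
    rw [integral_mul_const, integral_const_mul]
    rw [hM0]
    simp [Matrix.of_apply]
  have hsub : {ω | 3 * t ≤ opNorm (X ω - M0)} ⊆
      ⋃ z ∈ (Su ×ˢ Sv : Finset _),
        {ω | t ≤ |F z (X ω) - ∫ ω', F z (X ω') ∂μ|} := by
    intro ω hω
    obtain ⟨u, huS, v, hvS, hval⟩ := net_bound (X ω - M0) Su Sv hSunet hSvnet t ht hω
    simp only [Set.mem_iUnion, exists_prop]
    refine ⟨(u, v), Finset.mem_product.2 ⟨huS, hvS⟩, ?_⟩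
    show t ≤ |F (u, v) (X ω) - ∫ ω', F (u, v) (X ω') ∂μ|
    rw [hFint (u, v)]
    have hid : (∑ i, ∑ j, u i * (X ω - M0) i j * v j)
        = F (u, v) (X ω) - ∑ i, ∑ j, u i * M0 i j * v j := by
      rw [hF, ← Finset.sum_sub_distrib]
      refine Finset.sum_congr rfl fun i _ => ?_
      rw [← Finset.sum_sub_distrib]
      refine Finset.sum_congr rfl fun j _ => ?_
      simp [Matrix.sub_apply]; ring
    rw [← hid]
    exact hval
  have hexpval : Real.exp (-t ^ 2 / C) = ((9:ℝ) ^ (n + p))⁻¹ * ((n:ℝ) ^ 2)⁻¹ := by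
    have h1 : -t ^ 2 / C = -D := by rw [ht2]; field_simp
    rw [h1, hD]
    rw [show -(((n:ℝ) + ↑p) * Real.log 9 + 2 * Real.log ↑n)
        = (-(((n:ℝ) + ↑p) * Real.log 9)) + (-(2 * Real.log ↑n)) by ring,
      Real.exp_add, Real.exp_neg, Real.exp_neg]
    congr 1
    · rw [show ((n:ℝ) + ↑p) = ((n + p : ℕ) : ℝ) by push_cast; ring,
        Real.exp_nat_mul, Real.exp_log (by norm_num : (0:ℝ) < 9)]
    · rw [show (2:ℝ) * Real.log ↑n = ((2:ℕ):ℝ) * Real.log ↑n by norm_num,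
        Real.exp_nat_mul, Real.exp_log (by positivity : (0:ℝ) < (n:ℝ))]
  calc (μ {ω | 3 * t ≤ opNorm (X ω - M0)}).toReal
      ≤ ∑ z ∈ Su ×ˢ Sv, (μ {ω | t ≤ |F z (X ω) - ∫ ω', F z (X ω') ∂μ|}).toReal := by
        have h1 : μ {ω | 3 * t ≤ opNorm (X ω - M0)}
            ≤ ∑ z ∈ Su ×ˢ Sv, μ {ω | t ≤ |F z (X ω) - ∫ ω', F z (X ω') ∂μ|} :=
          (measure_mono hsub).trans (measure_biUnion_finset_le _ _)
        have hfin : ∀ z ∈ Su ×ˢ Sv,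
            μ {ω | t ≤ |F z (X ω) - ∫ ω', F z (X ω') ∂μ|} ≠ ⊤ :=
          fun z _ => measure_ne_top μ _
        have h2 := ENNReal.toReal_mono (by
          refine (ENNReal.sum_lt_top.2 ?_).ne
          exact fun z hz => (measure_lt_top μ _)) h1
        rwa [ENNReal.toReal_sum hfin] at h2
    _ ≤ ∑ z ∈ Su ×ˢ Sv, C * Real.exp (-t ^ 2 / C) :=
        Finset.sum_le_sum fun z hz => hconc (F z) (hFlip z hz) t ht.le
    _ = ((Su.card * Sv.card : ℕ) : ℝ) * (C * Real.exp (-t ^ 2 / C)) := by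
        rw [Finset.sum_const, Finset.card_product, nsmul_eq_mul]
    _ ≤ ((9:ℝ) ^ p * (9:ℝ) ^ n) * (C * Real.exp (-t ^ 2 / C)) := by
        apply mul_le_mul_of_nonneg_right _ (by positivity)
        have hcard : Su.card * Sv.card ≤ 9 ^ p * 9 ^ n := Nat.mul_le_mul hSucard hSvcard
        exact_mod_cast hcard
    _ = C / (n:ℝ) ^ 2 := by
        rw [hexpval, pow_add]
        have h9p : ((9:ℝ) ^ p) ≠ 0 := by positivity
        have h9n : ((9:ℝ) ^ n) ≠ 0 := by positivity
        have hn2 : ((n:ℝ) ^ 2) ≠ 0 := by positivity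
        field_simp
end

section
/- Let z be a spectral parameter (either z real with z < 0, or Im(z) > 0), and set η = 1/|z| in the real case and η = 1/Im(z) in the complex case. Then the map X ↦ ((1/n)·X·Xᵀ − z·I_p)⁻¹ from ℝ^{p×n} to complex p×p matrices is Lipschitz with constant n^{−1/2}·2^{3/2}·η²·|z|^{1/2} when both the domain and codomain are equipped with the Frobenius norm; i.e., for all X, H ∈ ℝ^{p×n}, ‖((1/n)·X·Xᵀ − z·I_p)⁻¹ − ((1/n)·(X+H)·(X+H)ᵀ − z·I_p)⁻¹‖_F ≤ n^{−1/2}·2^{3/2}·η²·|z|^{1/2}·‖H‖_F. -/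
open Matrix

namespace RL
open Complex


noncomputable def sn {p : ℕ} (v : Fin p → ℂ) : ℝ := ∑ i, ‖v i‖ ^ 2

lemma sn_nonneg {p : ℕ} (v : Fin p → ℂ) : 0 ≤ sn v :=
  Finset.sum_nonneg fun _ _ => sq_nonneg _

lemma sn_eq_zero {p : ℕ} {v : Fin p → ℂ} (h : sn v = 0) : v = 0 := by
  funext i
  have : ∀ j ∈ Finset.univ, (0:ℝ) ≤ ‖v j‖^2 := fun _ _ => sq_nonneg _
  have := (Finset.sum_eq_zero_iff_of_nonneg this).1 h i (Finset.mem_univ i)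
  simpa [pow_eq_zero_iff] using this

/-- complex Cauchy-Schwarz for dot products -/
lemma cs {p : ℕ} (v u : Fin p → ℂ) :
    ‖star v ⬝ᵥ u‖ ^ 2 ≤ sn v * sn u := by
  have h1 : ‖star v ⬝ᵥ u‖ ≤ ∑ i, ‖v i‖ * ‖u i‖ := by
    refine (norm_sum_le _ _).trans_eq ?_
    refine Finset.sum_congr rfl fun i _ => ?_
    simp [Pi.star_apply, _root_.map_mul]
  calc ‖star v ⬝ᵥ u‖ ^ 2 ≤ (∑ i, ‖v i‖ * ‖u i‖)^2 := by
        apply pow_le_pow_left₀ (norm_nonneg _) h1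
    _ ≤ (∑ i, ‖v i‖^2) * (∑ i, ‖u i‖^2) := Finset.sum_mul_sq_le_sq_mul_sq _ _ _
    _ = sn v * sn u := rfl

/-- star v ⬝ᵥ v = sn v -/
lemma dot_self {p : ℕ} (v : Fin p → ℂ) : star v ⬝ᵥ v = (sn v : ℂ) := by
  simp only [dotProduct, Pi.star_apply, sn]
  push_cast
  refine Finset.sum_congr rfl fun i _ => ?_
  have : star (v i) = (starRingEnd ℂ) (v i) := rfl
  rw [this, ← Complex.normSq_eq_conj_mul_self, ← Complex.sq_norm]
  norm_cast



set_option maxHeartbeats 1000000 in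
/-- Key real inequality. -/
lemma keyineq (zr zi m η a b s D : ℝ)
    (hm0 : 0 ≤ m) (hm2 : m^2 = zr^2 + zi^2)
    (hcase : (zi = 0 ∧ zr < 0 ∧ η = 1/m) ∨ (zi ≠ 0 ∧ η = 1/|zi|))
    (ha : 0 ≤ a) (hs : 0 ≤ s) (hb : 0 ≤ b)
    (K1 : (a - s*zr)^2 + (s*zi)^2 ≤ s*D)
    (K2 : a^2 ≤ s*b)
    (K3 : D = b - 2*zr*a + m^2*s) :
    s ≤ η^2*D ∧ a ≤ 2*η^2*m*D := by
  rcases hcase with ⟨h0, hneg, hη⟩ | ⟨h0, hη⟩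
  · -- real negative case: m = -zr
    have hmzr : m = -zr := by nlinarith [sq_nonneg (m + zr), sq_nonneg (m - zr)]
    have hmpos : 0 < m := by linarith
    have hη2 : η^2 = 1/m^2 := by rw [hη]; ring
    constructor
    · rw [hη2, div_mul_eq_mul_div, le_div_iff₀ (by positivity)]
      nlinarith
    · rw [hη2]
      have h2 : 2*(1/m^2)*m*D = 2*D/m := by field_simp
      rw [h2, le_div_iff₀ hmpos]
      nlinarith
  · -- complex case
    have htpos : 0 < |zi| := abs_pos.2 h0
    have hzi2 : 0 < zi^2 := lt_of_le_of_ne (sq_nonneg zi) (Ne.symm (pow_ne_zero 2 h0))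
    have ht2 : |zi|^2 = zi^2 := sq_abs zi
    have hmpos : 0 < m := by nlinarith
    have hη2 : η^2 = 1/zi^2 := by rw [hη, ← ht2]; ring
    have hzr : |zr| ≤ m := by
      rw [← Real.sqrt_sq hm0, ← Real.sqrt_sq_eq_abs]
      exact Real.sqrt_le_sqrt (by nlinarith)
    have hzr' := abs_le.1 hzr
    have hsD : 0 ≤ s * D :=
      le_trans (by nlinarith [sq_nonneg (a - s*zr), sq_nonneg (s*zi)]) K1
    have hD0 : 0 ≤ D := by
      rcases eq_or_lt_of_le hs with h | h
      · have ha0 : a = 0 := by nlinarith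
        rw [K3, ← h, ha0]; nlinarith
      · exact le_of_mul_le_mul_left (by linarith) h
    -- part (i): s * zi^2 ≤ D
    have hszi : s * zi^2 ≤ D := by
      rcases eq_or_lt_of_le hs with h | h
      · rw [← h]; simpa using hD0
      · have : s * (s * zi^2) ≤ s * D := by nlinarith [sq_nonneg (a - s*zr)]
        exact le_of_mul_le_mul_left this h
    have hi : s ≤ η^2*D := by
      rw [hη2, div_mul_eq_mul_div, le_div_iff₀ hzi2]
      linarith [hszi]
    refine ⟨hi, ?_⟩
    -- part (ii): a * zi^2 ≤ 2*m*D
    have hii : a * zi^2 ≤ 2*m*D := by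
      have hDge : b - 2*m*a + m^2*s ≤ D := by nlinarith
      rcases le_or_gt a (2*m*s) with hc | hc
      · nlinarith
      · rcases eq_or_lt_of_le hs with h | hspos
        · exfalso; nlinarith
        · have hDb : a^2 ≤ 4*s*D := by nlinarith [sq_nonneg (a - m*s)]
          have hma : 2*zi^2*s < m*a := by nlinarith
          nlinarith
    rw [hη2, show 2*(1/zi^2)*m*D = (2*m*D)/zi^2 by ring, le_div_iff₀ hzi2]
    linarith

lemma normsub (u w z : ℂ) :
    ‖u - z*w‖^2 = ‖u‖^2 - 2*z.re*((starRingEnd ℂ) w * u).re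
      - 2*z.im*((starRingEnd ℂ) w * u).im + ‖z‖^2*‖w‖^2 := by
  simp only [Complex.sq_norm, Complex.normSq_apply, Complex.sub_re,
    Complex.sub_im, Complex.mul_re, Complex.mul_im, Complex.conj_re, Complex.conj_im]
  ring

lemma sn_sub_smul {p : ℕ} (u w : Fin p → ℂ) (z : ℂ) :
    sn (u - z • w) = sn u - 2*z.re*(star w ⬝ᵥ u).re - 2*z.im*(star w ⬝ᵥ u).im
      + ‖z‖^2 * sn w := by
  have hre : (star w ⬝ᵥ u).re = ∑ i, ((starRingEnd ℂ) (w i) * u i).re := by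
    simp [dotProduct, Complex.re_sum]
  have him : (star w ⬝ᵥ u).im = ∑ i, ((starRingEnd ℂ) (w i) * u i).im := by
    simp [dotProduct, Complex.im_sum]
  simp only [sn, Pi.sub_apply, Pi.smul_apply, smul_eq_mul, normsub, hre, him,
    Finset.mul_sum, Finset.sum_add_distrib, Finset.sum_sub_distrib]

/-- dot product with the PSD form -/
lemma dot_psd {p n : ℕ} (W : Matrix (Fin p) (Fin n) ℝ) (w : Fin p → ℂ) :
    star w ⬝ᵥ (((n:ℂ)⁻¹ • (W.map (fun a => (a:ℂ)) * (W.map (fun a => (a:ℂ)))ᵀ)).mulVec w)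
      = (((n:ℝ)⁻¹ * sn ((W.map (fun a => (a:ℂ)))ᵀ.mulVec w) : ℝ) : ℂ) := by
  set Wc := W.map (fun a => (a:ℂ)) with hWc
  have h1 : ((n:ℂ)⁻¹ • (Wc * Wcᵀ)).mulVec w = (n:ℂ)⁻¹ • ((Wc * Wcᵀ).mulVec w) :=
    smul_mulVec _ _ _
  have h2 : (Wc * Wcᵀ).mulVec w = Wc.mulVec (Wcᵀ.mulVec w) := (mulVec_mulVec _ _ _).symm
  have h3 : vecMul (star w) Wc = star (Wcᵀ.mulVec w) := by
    funext j
    simp only [vecMul, mulVec, dotProduct, Pi.star_apply, star_sum, star_mul']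
    refine Finset.sum_congr rfl fun i _ => ?_
    simp [hWc, Matrix.map_apply, mul_comm, Complex.conj_ofReal]
  rw [h1, dotProduct_smul, h2, dotProduct_mulVec, h3, dot_self, smul_eq_mul]
  push_cast
  ring

lemma core {p n : ℕ} (W : Matrix (Fin p) (Fin n) ℝ) (z : ℂ) (η : ℝ)
    (hc : (z.im = 0 ∧ z.re < 0 ∧ η = 1/‖z‖) ∨ (z.im ≠ 0 ∧ η = 1/|z.im|))
    (w : Fin p → ℂ) :
    sn w ≤ η^2 * sn (((((n:ℂ)⁻¹ • (W.map (fun a => (a:ℂ)) * (W.map (fun a => (a:ℂ)))ᵀ)) - z•1)).mulVec w)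
    ∧ (n:ℝ)⁻¹ * sn ((W.map (fun a => (a:ℂ)))ᵀ.mulVec w)
        ≤ 2*η^2*‖z‖ * sn (((((n:ℂ)⁻¹ • (W.map (fun a => (a:ℂ)) * (W.map (fun a => (a:ℂ)))ᵀ)) - z•1)).mulVec w) := by
  set A := ((n:ℂ)⁻¹ • (W.map (fun a => (a:ℂ)) * (W.map (fun a => (a:ℂ)))ᵀ)) with hA
  set u := A.mulVec w with hu
  set a := (n:ℝ)⁻¹ * sn ((W.map (fun a => (a:ℂ)))ᵀ.mulVec w) with ha'
  set s := sn w with hs'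
  set b := sn u with hb'
  have hSw : (A - z•1).mulVec w = u - z • w := by
    rw [sub_mulVec]
    congr 1
    rw [smul_mulVec, one_mulVec]
  set D := sn ((A - z•1).mulVec w) with hD'
  have hdot : star w ⬝ᵥ u = (a:ℂ) := dot_psd W w
  have ha : 0 ≤ a := mul_nonneg (by positivity) (sn_nonneg _)
  have hs : 0 ≤ s := sn_nonneg _
  have hb : 0 ≤ b := sn_nonneg _
  have hK3 : D = b - 2*z.re*a + ‖z‖^2*s := by
    rw [hD', hSw, sn_sub_smul, hdot]
    simp only [Complex.ofReal_re, Complex.ofReal_im, mul_zero, sub_zero]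
    rfl
  have hdotS : star w ⬝ᵥ ((A - z•1).mulVec w) = (a:ℂ) - z * (s:ℂ) := by
    rw [hSw, dotProduct_sub, hdot, dotProduct_smul, dot_self, smul_eq_mul]
  have hK1 : (a - s*z.re)^2 + (s*z.im)^2 ≤ s*D := by
    have := cs w ((A - z•1).mulVec w)
    rw [hdotS] at this
    have habs : ‖(a:ℂ) - z*(s:ℂ)‖^2 = (a - s*z.re)^2 + (s*z.im)^2 := by
      rw [Complex.sq_norm, Complex.normSq_apply]
      simp [Complex.sub_re, Complex.sub_im, Complex.mul_re, Complex.mul_im]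
      ring
    rw [habs] at this
    exact this
  have hK2 : a^2 ≤ s*b := by
    have := cs w u
    rw [hdot] at this
    simpa [Complex.sq_norm, Complex.normSq_ofReal, sq] using this
  have hm2 : ‖z‖^2 = z.re^2 + z.im^2 := by
    rw [Complex.sq_norm, Complex.normSq_apply]; ring
  exact keyineq z.re z.im ‖z‖ η a b s D (norm_nonneg z) hm2 hc ha hs hb hK1 hK2 hK3


noncomputable def fsq {p q : ℕ} (M : Matrix (Fin p) (Fin q) ℂ) : ℝ := ∑ i, ∑ j, ‖M i j‖ ^ 2

lemma fsq_rows {p q : ℕ} (M : Matrix (Fin p) (Fin q) ℂ) : fsq M = ∑ i, sn (M i) := rfl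

lemma fsq_cols {p q : ℕ} (M : Matrix (Fin p) (Fin q) ℂ) :
    fsq M = ∑ j, sn (fun i => M i j) := Finset.sum_comm

lemma fsq_transpose {p q : ℕ} (M : Matrix (Fin p) (Fin q) ℂ) : fsq Mᵀ = fsq M := by
  rw [fsq_cols, fsq_rows]; rfl

lemma mul_bound_left {p q r : ℕ} (P : Matrix (Fin p) (Fin q) ℂ) (N : Matrix (Fin q) (Fin r) ℂ)
    (C : ℝ) (h : ∀ v, sn (P.mulVec v) ≤ C * sn v) : fsq (P * N) ≤ C * fsq N := by
  rw [fsq_cols, fsq_cols N, Finset.mul_sum]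
  refine Finset.sum_le_sum fun j _ => ?_
  have : (fun i => (P * N) i j) = P.mulVec (fun k => N k j) := by
    funext i; simp [Matrix.mul_apply, Matrix.mulVec, dotProduct]
  rw [this]; exact h _

lemma mul_bound_right {p q r : ℕ} (N : Matrix (Fin p) (Fin q) ℂ) (Q : Matrix (Fin q) (Fin r) ℂ)
    (C : ℝ) (h : ∀ v, sn (Qᵀ.mulVec v) ≤ C * sn v) : fsq (N * Q) ≤ C * fsq N := by
  rw [fsq_rows, fsq_rows N, Finset.mul_sum]
  refine Finset.sum_le_sum fun i _ => ?_
  have : (N * Q) i = Qᵀ.mulVec (N i) := by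
    funext j; simp [Matrix.mul_apply, Matrix.mulVec, dotProduct, Matrix.transpose_apply, mul_comm]
  rw [this]; exact h _

lemma adj_bound {p q : ℕ} (M : Matrix (Fin p) (Fin q) ℂ) (C : ℝ) (hC : 0 ≤ C)
    (h : ∀ v : Fin p → ℂ, sn (Mᴴ.mulVec v) ≤ C * sn v) :
    ∀ u : Fin q → ℂ, sn (M.mulVec u) ≤ C * sn u := by
  intro u
  have h1 : star u ⬝ᵥ (Mᴴ.mulVec (M.mulVec u)) = (sn (M.mulVec u) : ℂ) := by
    rw [dotProduct_mulVec, ← star_mulVec, dot_self]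
  have h2 := cs u (Mᴴ.mulVec (M.mulVec u))
  rw [h1] at h2
  have h3 : ‖((sn (M.mulVec u) : ℝ) : ℂ)‖ = sn (M.mulVec u) := by
    rw [Complex.norm_real, Real.norm_of_nonneg (sn_nonneg _)]
  rw [h3] at h2
  have h4 : sn (M.mulVec u) ^ 2 ≤ sn u * (C * sn (M.mulVec u)) :=
    h2.trans (mul_le_mul_of_nonneg_left (h _) (sn_nonneg u))
  rcases eq_or_lt_of_le (sn_nonneg (M.mulVec u)) with h5 | h5
  · rw [← h5]; exact mul_nonneg hC (sn_nonneg u)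
  · nlinarith [sn_nonneg u]

lemma isunit_of_bound {p : ℕ} (S : Matrix (Fin p) (Fin p) ℂ) (η : ℝ)
    (h : ∀ w, sn w ≤ η^2 * sn (S.mulVec w)) : IsUnit S.det := by
  rw [← Matrix.isUnit_iff_isUnit_det, ← Matrix.mulVec_injective_iff_isUnit]
  intro u v huv
  have h0 : S.mulVec (u - v) = 0 := by rw [mulVec_sub, huv, sub_self]
  have h2 := h (u - v)
  rw [h0] at h2
  have hsn0 : sn (0 : Fin p → ℂ) = 0 := by simp [sn]
  rw [hsn0, mul_zero] at h2
  have := sn_eq_zero (le_antisymm h2 (sn_nonneg _))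
  exact sub_eq_zero.1 this

lemma inv_mulVec_cancel {p : ℕ} (S : Matrix (Fin p) (Fin p) ℂ) (h : IsUnit S.det)
    (v : Fin p → ℂ) : S.mulVec (S⁻¹.mulVec v) = v := by
  rw [mulVec_mulVec, Matrix.mul_nonsing_inv _ h, one_mulVec]

noncomputable def toE {p q : ℕ} (M : Matrix (Fin p) (Fin q) ℂ) :
    EuclideanSpace ℂ (Fin p × Fin q) := (WithLp.equiv 2 _).symm (fun x => M x.1 x.2)

lemma frob_eq_sqrt_fsq {p q : ℕ} (M : Matrix (Fin p) (Fin q) ℂ) :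
    frobNorm M = Real.sqrt (fsq M) := rfl

lemma frob_eq_norm {p q : ℕ} (M : Matrix (Fin p) (Fin q) ℂ) : frobNorm M = ‖toE M‖ := by
  rw [EuclideanSpace.norm_eq, frob_eq_sqrt_fsq, fsq]
  congr 1
  rw [Fintype.sum_prod_type]
  rfl

lemma frob_add_le {p q : ℕ} (M N : Matrix (Fin p) (Fin q) ℂ) :
    frobNorm (M + N) ≤ frobNorm M + frobNorm N := by
  rw [frob_eq_norm, frob_eq_norm, frob_eq_norm]
  exact norm_add_le (toE M) (toE N)

lemma frob_smul {p q : ℕ} (c : ℂ) (M : Matrix (Fin p) (Fin q) ℂ) :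
    frobNorm (c • M) = ‖c‖ * frobNorm M := by
  rw [frob_eq_norm, frob_eq_norm]
  exact norm_smul c (toE M)


end RL

open RL

set_option maxHeartbeats 1000000 in
/-- For a spectral parameter `z` (real negative or of positive imaginary part,
with `η = 1/|z|` resp. `η = 1/Im z`), the map `X ↦ ((1/n)·X·Xᵀ − z·I)⁻¹` is Lipschitz with
constant `n^(−1/2)·2^(3/2)·η²·|z|^(1/2)` for the Frobenius norms. -/
theorem resolvent_lipschitz
    {p n : ℕ} (z : ℂ) (η : ℝ)
    (hz : (z.im = 0 ∧ z.re < 0 ∧ η = 1 / ‖z‖) ∨ (0 < z.im ∧ η = 1 / z.im)) :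
    ∀ X H : Matrix (Fin p) (Fin n) ℝ,
      frobNorm
        ((((n : ℂ)⁻¹ • (X.map (fun a => (a : ℂ)) * (X.map (fun a => (a : ℂ)))ᵀ) - z • 1)⁻¹)
          -
         (((n : ℂ)⁻¹ • ((X + H).map (fun a => (a : ℂ)) * ((X + H).map (fun a => (a : ℂ)))ᵀ)
            - z • 1)⁻¹))
      ≤ (n : ℝ) ^ (-(1 : ℝ) / 2) * (2 : ℝ) ^ ((3 : ℝ) / 2) * η ^ 2
          * ‖z‖ ^ ((1 : ℝ) / 2) * frobNorm H := by
  intro X H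
  -- basic facts about z and η
  have hz0 : z ≠ 0 := by
    rcases hz with ⟨h1, h2, _⟩ | ⟨h1, _⟩
    · intro h; rw [h] at h2; simp at h2
    · intro h; rw [h] at h1; simp at h1
  set m := ‖z‖ with hm
  have hmpos : 0 < m := norm_pos_iff.mpr hz0
  have hη0 : 0 < η := by
    rcases hz with ⟨_, _, h3⟩ | ⟨h1, h2⟩
    · rw [h3]; positivity
    · rw [h2]; positivity
  have hz' : (z.im = 0 ∧ z.re < 0 ∧ η = 1/‖z‖) ∨ (z.im ≠ 0 ∧ η = 1/|z.im|) := by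
    rcases hz with h | ⟨h1, h2⟩
    · exact Or.inl h
    · exact Or.inr ⟨ne_of_gt h1, by rw [h2, _root_.abs_of_pos h1]⟩
  set zc := (starRingEnd ℂ) z with hzc
  have hzc' : (zc.im = 0 ∧ zc.re < 0 ∧ η = 1/‖zc‖) ∨ (zc.im ≠ 0 ∧ η = 1/|zc.im|) := by
    rcases hz' with ⟨h1, h2, h3⟩ | ⟨h1, h2⟩
    · exact Or.inl ⟨by simp [hzc, h1], by simpa [hzc] using h2, by rwa [hzc, Complex.norm_conj]⟩
    · exact Or.inr ⟨by simp [hzc]; exact h1, by rw [hzc]; simpa using h2⟩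
  have habszc : ‖zc‖ = m := Complex.norm_conj z
  -- case n = 0
  rcases Nat.eq_zero_or_pos n with hn | hn
  · subst hn
    have hXX : (X.map (fun a => (a:ℂ))) * (X.map (fun a => (a:ℂ)))ᵀ = 0 := by
      ext i j; simp [Matrix.mul_apply]
    have hYY : ((X+H).map (fun a => (a:ℂ))) * ((X+H).map (fun a => (a:ℂ)))ᵀ = 0 := by
      ext i j; simp [Matrix.mul_apply]
    rw [hXX, hYY, sub_self]
    have h0 : frobNorm (0 : Matrix (Fin p) (Fin p) ℂ) = 0 := by
      simp [frobNorm]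
    rw [h0]
    have h1 : ((0:ℕ) : ℝ) ^ (-(1:ℝ)/2) = 0 := by
      rw [Nat.cast_zero]
      exact Real.zero_rpow (by norm_num)
    rw [h1, zero_mul, zero_mul, zero_mul, zero_mul]
  -- main case : 0 < n
  have hnR : (0:ℝ) < (n:ℝ) := by exact_mod_cast hn
  set Xc := X.map (fun a => (a:ℂ)) with hXc
  set Yc := (X+H).map (fun a => (a:ℂ)) with hYcd
  set Hc := H.map (fun a => (a:ℂ)) with hHcd
  set S₁ := (n:ℂ)⁻¹ • (Xc * Xcᵀ) - z • 1 with hS₁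
  set S₂ := (n:ℂ)⁻¹ • (Yc * Ycᵀ) - z • 1 with hS₂
  set S₁' := (n:ℂ)⁻¹ • (Xc * Xcᵀ) - zc • 1 with hS₁'
  set S₂' := (n:ℂ)⁻¹ • (Yc * Ycᵀ) - zc • 1 with hS₂'
  have hYc : Yc = Xc + Hc := by
    rw [hYcd, hXc, hHcd]; ext i j
    simp [Matrix.map_apply, Matrix.add_apply]
  -- core bounds
  have C1X := core X z η hz'
  have C1Y := core (X+H) z η hz'
  have C1X' := core X zc η hzc'
  have C1Y' := core (X+H) zc η hzc'
  rw [← hXc, ← hS₁] at C1X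
  rw [← hYcd, ← hS₂] at C1Y
  rw [← hXc, ← hS₁', habszc] at C1X'
  rw [← hYcd, ← hS₂', habszc] at C1Y'
  -- invertibility
  have hU1 : IsUnit S₁.det := isunit_of_bound _ η (fun w => (C1X w).1)
  have hU2 : IsUnit S₂.det := isunit_of_bound _ η (fun w => (C1Y w).1)
  have hU1' : IsUnit S₁'.det := isunit_of_bound _ η (fun w => (C1X' w).1)
  have hU2' : IsUnit S₂'.det := isunit_of_bound _ η (fun w => (C1Y' w).1)
  -- conjugation / transposition facts
  have hXcH : Xcᴴ = Xcᵀ := by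
    rw [hXc]; ext i j
    simp [Matrix.conjTranspose_apply, Matrix.map_apply, Complex.conj_ofReal]
  have hXcTH : (Xcᵀ)ᴴ = Xc := by
    rw [hXc]; ext i j
    simp [Matrix.conjTranspose_apply, Matrix.map_apply, Complex.conj_ofReal]
  have hYcH : Ycᴴ = Ycᵀ := by
    rw [hYcd]; ext i j
    simp [Matrix.conjTranspose_apply, Matrix.map_apply, Complex.conj_ofReal]
  have hYcTH : (Ycᵀ)ᴴ = Yc := by
    rw [hYcd]; ext i j
    simp [Matrix.conjTranspose_apply, Matrix.map_apply, Complex.conj_ofReal]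
  have hS1H : S₁ᴴ = S₁' := by
    rw [hS₁, hS₁', conjTranspose_sub, Matrix.conjTranspose_smul, conjTranspose_mul,
      hXcTH, hXcH, Matrix.conjTranspose_smul, conjTranspose_one]
    congr 1
    · congr 1
      simp
  have hS2H : S₂ᴴ = S₂' := by
    rw [hS₂, hS₂', conjTranspose_sub, Matrix.conjTranspose_smul, conjTranspose_mul,
      hYcTH, hYcH, Matrix.conjTranspose_smul, conjTranspose_one]
    congr 1
    · congr 1
      simp
  have hR1H : (S₁⁻¹)ᴴ = S₁'⁻¹ := by rw [Matrix.conjTranspose_nonsing_inv, hS1H]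
  have hR2H : (S₂⁻¹)ᴴ = S₂'⁻¹ := by rw [Matrix.conjTranspose_nonsing_inv, hS2H]
  have hS2T : S₂ᵀ = S₂ := by
    rw [hS₂, transpose_sub, Matrix.transpose_smul, transpose_mul, transpose_transpose,
      Matrix.transpose_smul, transpose_one]
  have hR2T : (S₂⁻¹)ᵀ = S₂⁻¹ := by rw [Matrix.transpose_nonsing_inv, hS2T]
  -- mulVec bounds
  set K := 2*η^2*m with hK
  have hK0 : 0 ≤ K := by rw [hK]; positivity
  have E1 : ∀ v, sn (S₁⁻¹.mulVec v) ≤ η^2 * sn v := fun v => by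
    have h := (C1X (S₁⁻¹.mulVec v)).1
    rwa [inv_mulVec_cancel _ hU1 v] at h
  have E2 : ∀ v, sn (S₂⁻¹.mulVec v) ≤ η^2 * sn v := fun v => by
    have h := (C1Y (S₂⁻¹.mulVec v)).1
    rwa [inv_mulVec_cancel _ hU2 v] at h
  have EYt : ∀ v, sn ((Ycᵀ * S₂⁻¹).mulVec v) ≤ ((n:ℝ)*K) * sn v := fun v => by
    have h := (C1Y (S₂⁻¹.mulVec v)).2
    rw [inv_mulVec_cancel _ hU2 v] at h
    rw [← mulVec_mulVec]
    calc sn (Ycᵀ.mulVec (S₂⁻¹.mulVec v))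
        = (n:ℝ) * ((n:ℝ)⁻¹ * sn (Ycᵀ.mulVec (S₂⁻¹.mulVec v))) := by
          field_simp
      _ ≤ (n:ℝ) * (K * sn v) := mul_le_mul_of_nonneg_left h hnR.le
      _ = ((n:ℝ)*K) * sn v := by ring
  have EXt' : ∀ v, sn ((Xcᵀ * S₁'⁻¹).mulVec v) ≤ ((n:ℝ)*K) * sn v := fun v => by
    have h := (C1X' (S₁'⁻¹.mulVec v)).2
    rw [inv_mulVec_cancel _ hU1' v] at h
    rw [← mulVec_mulVec]
    calc sn (Xcᵀ.mulVec (S₁'⁻¹.mulVec v))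
        = (n:ℝ) * ((n:ℝ)⁻¹ * sn (Xcᵀ.mulVec (S₁'⁻¹.mulVec v))) := by
          field_simp
      _ ≤ (n:ℝ) * (K * sn v) := mul_le_mul_of_nonneg_left h hnR.le
      _ = ((n:ℝ)*K) * sn v := by ring
  have EYt' : ∀ v, sn ((Ycᵀ * S₂'⁻¹).mulVec v) ≤ ((n:ℝ)*K) * sn v := fun v => by
    have h := (C1Y' (S₂'⁻¹.mulVec v)).2
    rw [inv_mulVec_cancel _ hU2' v] at h
    rw [← mulVec_mulVec]
    calc sn (Ycᵀ.mulVec (S₂'⁻¹.mulVec v))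
        = (n:ℝ) * ((n:ℝ)⁻¹ * sn (Ycᵀ.mulVec (S₂'⁻¹.mulVec v))) := by
          field_simp
      _ ≤ (n:ℝ) * (K * sn v) := mul_le_mul_of_nonneg_left h hnR.le
      _ = ((n:ℝ)*K) * sn v := by ring
  have hnK0 : 0 ≤ (n:ℝ)*K := mul_nonneg hnR.le hK0
  have ER1X : ∀ v, sn ((S₁⁻¹ * Xc).mulVec v) ≤ ((n:ℝ)*K) * sn v := by
    apply adj_bound _ _ hnK0
    intro v
    have hM : (S₁⁻¹ * Xc)ᴴ = Xcᵀ * S₁'⁻¹ := by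
      rw [conjTranspose_mul, hXcH, hR1H]
    rw [hM]; exact EXt' v
  have ER2Y : ∀ v, sn ((S₂⁻¹ * Yc).mulVec v) ≤ ((n:ℝ)*K) * sn v := by
    apply adj_bound _ _ hnK0
    intro v
    have hM : (S₂⁻¹ * Yc)ᴴ = Ycᵀ * S₂'⁻¹ := by
      rw [conjTranspose_mul, hYcH, hR2H]
    rw [hM]; exact EYt' v
  -- resolvent identity
  have hid : S₁⁻¹ - S₂⁻¹
      = (n:ℂ)⁻¹ • ((S₁⁻¹ * Xc) * (Hcᵀ * S₂⁻¹) + (S₁⁻¹ * Hc) * (Ycᵀ * S₂⁻¹)) := by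
    have e1 : S₁⁻¹ * S₂ * S₂⁻¹ = S₁⁻¹ := by
      rw [Matrix.mul_assoc, Matrix.mul_nonsing_inv _ hU2, Matrix.mul_one]
    have e2 : S₁⁻¹ * S₁ * S₂⁻¹ = S₂⁻¹ := by
      rw [Matrix.nonsing_inv_mul _ hU1, Matrix.one_mul]
    have e3 : S₂ - S₁ = (n:ℂ)⁻¹ • (Xc * Hcᵀ + Hc * Ycᵀ) := by
      have h4 : (Xc+Hc)*((Xc+Hc)ᵀ) - Xc*Xcᵀ = Xc*Hcᵀ + Hc*(Xc+Hc)ᵀ := by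
        rw [transpose_add, Matrix.add_mul, Matrix.mul_add, Matrix.mul_add]
        abel
      calc S₂ - S₁ = (n:ℂ)⁻¹ • ((Xc+Hc)*((Xc+Hc)ᵀ)) - (n:ℂ)⁻¹ • (Xc*Xcᵀ) := by
            rw [hS₁, hS₂, hYc]; exact sub_sub_sub_cancel_right _ _ _
        _ = (n:ℂ)⁻¹ • ((Xc+Hc)*((Xc+Hc)ᵀ) - Xc*Xcᵀ) := (smul_sub _ _ _).symm
        _ = (n:ℂ)⁻¹ • (Xc*Hcᵀ + Hc*(Xc+Hc)ᵀ) := by rw [h4]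
        _ = (n:ℂ)⁻¹ • (Xc * Hcᵀ + Hc * Ycᵀ) := by rw [← hYc]
    calc S₁⁻¹ - S₂⁻¹ = S₁⁻¹ * S₂ * S₂⁻¹ - S₁⁻¹ * S₁ * S₂⁻¹ := by rw [e1, e2]
      _ = S₁⁻¹ * (S₂ - S₁) * S₂⁻¹ := by noncomm_ring
      _ = (n:ℂ)⁻¹ • (S₁⁻¹ * (Xc * Hcᵀ + Hc * Ycᵀ) * S₂⁻¹) := by
          rw [e3, mul_smul_comm, smul_mul_assoc]
      _ = (n:ℂ)⁻¹ • ((S₁⁻¹ * Xc) * (Hcᵀ * S₂⁻¹) + (S₁⁻¹ * Hc) * (Ycᵀ * S₂⁻¹)) := by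
          congr 1
          rw [Matrix.mul_add, Matrix.add_mul]
          simp only [Matrix.mul_assoc]
  -- Frobenius estimates
  set F := frobNorm H with hF
  have hF0 : 0 ≤ F := by rw [hF]; exact Real.sqrt_nonneg _
  have hfsqH : fsq Hc = F^2 := by
    have h1 : fsq Hc = ∑ i, ∑ j, ‖H i j‖^2 := by
      unfold fsq
      refine Finset.sum_congr rfl fun i _ => Finset.sum_congr rfl fun j _ => ?_
      rw [hHcd, Matrix.map_apply, Complex.norm_real]
    rw [h1, hF]
    unfold frobNorm
    rw [Real.sq_sqrt (Finset.sum_nonneg fun i _ => Finset.sum_nonneg fun j _ => sq_nonneg _)]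
  have hT1 : fsq ((S₁⁻¹ * Xc) * (Hcᵀ * S₂⁻¹)) ≤ ((n:ℝ)*K) * (η^2 * F^2) := by
    calc fsq ((S₁⁻¹ * Xc) * (Hcᵀ * S₂⁻¹)) ≤ ((n:ℝ)*K) * fsq (Hcᵀ * S₂⁻¹) :=
          mul_bound_left _ _ _ ER1X
      _ ≤ ((n:ℝ)*K) * (η^2 * fsq Hcᵀ) := by
          refine mul_le_mul_of_nonneg_left ?_ hnK0
          exact mul_bound_right _ _ _ (fun v => by rw [hR2T]; exact E2 v)
      _ = ((n:ℝ)*K) * (η^2 * F^2) := by rw [fsq_transpose, hfsqH]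
  have hT2 : fsq ((S₁⁻¹ * Hc) * (Ycᵀ * S₂⁻¹)) ≤ ((n:ℝ)*K) * (η^2 * F^2) := by
    calc fsq ((S₁⁻¹ * Hc) * (Ycᵀ * S₂⁻¹)) ≤ ((n:ℝ)*K) * fsq (S₁⁻¹ * Hc) := by
          refine mul_bound_right _ _ _ (fun v => ?_)
          have hQ : (Ycᵀ * S₂⁻¹)ᵀ = S₂⁻¹ * Yc := by
            rw [transpose_mul, transpose_transpose, hR2T]
          rw [hQ]; exact ER2Y v
      _ ≤ ((n:ℝ)*K) * (η^2 * fsq Hc) := by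
          refine mul_le_mul_of_nonneg_left ?_ hnK0
          exact mul_bound_left _ _ _ E1
      _ = ((n:ℝ)*K) * (η^2 * F^2) := by rw [hfsqH]
  set c := Real.sqrt (2*(n:ℝ)*m) * η^2 * F with hc
  have hc0 : 0 ≤ c := by rw [hc]; positivity
  have hcsq : ((n:ℝ)*K) * (η^2 * F^2) = c^2 := by
    rw [hc, hK, mul_pow, mul_pow, Real.sq_sqrt (by positivity)]
    ring
  have hfT1 : frobNorm ((S₁⁻¹ * Xc) * (Hcᵀ * S₂⁻¹)) ≤ c := by
    rw [frob_eq_sqrt_fsq, ← Real.sqrt_sq hc0]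
    exact Real.sqrt_le_sqrt (hT1.trans_eq hcsq)
  have hfT2 : frobNorm ((S₁⁻¹ * Hc) * (Ycᵀ * S₂⁻¹)) ≤ c := by
    rw [frob_eq_sqrt_fsq, ← Real.sqrt_sq hc0]
    exact Real.sqrt_le_sqrt (hT2.trans_eq hcsq)
  -- final computation
  have hnorm : ‖(n:ℂ)⁻¹‖ = (n:ℝ)⁻¹ := by
    rw [norm_inv, Complex.norm_natCast]
  calc frobNorm (S₁⁻¹ - S₂⁻¹)
      = (n:ℝ)⁻¹ * frobNorm ((S₁⁻¹ * Xc) * (Hcᵀ * S₂⁻¹) + (S₁⁻¹ * Hc) * (Ycᵀ * S₂⁻¹)) := by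
        rw [hid, frob_smul, hnorm]
    _ ≤ (n:ℝ)⁻¹ * (c + c) := by
        refine mul_le_mul_of_nonneg_left ?_ (inv_nonneg.2 hnR.le)
        exact (frob_add_le _ _).trans (add_le_add hfT1 hfT2)
    _ = (n:ℝ) ^ (-(1:ℝ)/2) * (2:ℝ) ^ ((3:ℝ)/2) * η^2 * m ^ ((1:ℝ)/2) * F := by
        have hsn : Real.sqrt (n:ℝ) ≠ 0 := by positivity
        have h1 : (n:ℝ) ^ (-(1:ℝ)/2) = (Real.sqrt (n:ℝ))⁻¹ := by
          rw [show (-(1:ℝ)/2) = -(1/2 : ℝ) by norm_num, Real.rpow_neg hnR.le,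
            ← Real.sqrt_eq_rpow]
        have h2 : (2:ℝ) ^ ((3:ℝ)/2) = 2 * Real.sqrt 2 := by
          rw [show ((3:ℝ)/2) = (1:ℝ) + 1/2 by norm_num, Real.rpow_add (by norm_num),
            Real.rpow_one, ← Real.sqrt_eq_rpow]
        have h3 : m ^ ((1:ℝ)/2) = Real.sqrt m := (Real.sqrt_eq_rpow m).symm
        have h4 : Real.sqrt (2*(n:ℝ)*m) = Real.sqrt 2 * Real.sqrt (n:ℝ) * Real.sqrt m := by
          rw [Real.sqrt_mul (by positivity), Real.sqrt_mul (by norm_num)]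
        have h5 : (n:ℝ) = Real.sqrt (n:ℝ) * Real.sqrt (n:ℝ) := (Real.mul_self_sqrt hnR.le).symm
        rw [h1, h2, h3, hc, h4, h5]
        field_simp
        rw [Real.sq_sqrt (sq_nonneg _)]
        ring
end

section
/- Let Σ be a real symmetric positive semidefinite p×p matrix with ‖Σ‖_op ≤ 1, let n ≥ 1, set γ = p/n, let z < 0 be real, and define F(l) = z + (z/n)·Tr(((z/l)·Σ − z·I_p)⁻¹·Σ) for l ≤ z. Then for every l ≤ z one has z − γ ≤ F(l) ≤ z ≤ 0. In particular, if c ≤ z satisfies F(c) = c, then 1 ≤ c/z ≤ 1 + γ/|z|. -/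
open Matrix

/-- Trace identity for the resolvent-type matrix. -/
theorem trace_resolvent_eq {p : ℕ} (A : Matrix (Fin p) (Fin p) ℝ) (hH : A.IsHermitian)
    (t z : ℝ) (hz : z < 0) (ht : 0 < t) (hlam0 : ∀ i, 0 ≤ hH.eigenvalues i) :
    ((t • A - z • 1)⁻¹ * A).trace
      = ∑ i, (t * hH.eigenvalues i - z)⁻¹ * hH.eigenvalues i := by
  set lam := hH.eigenvalues with hlamdef
  set U : Matrix (Fin p) (Fin p) ℝ := (hH.eigenvectorUnitary : Matrix (Fin p) (Fin p) ℝ) with hU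
  have hU1 : U * star U = 1 := (Matrix.mem_unitaryGroup_iff).mp hH.eigenvectorUnitary.2
  have hU2 : star U * U = 1 := (Matrix.mem_unitaryGroup_iff').mp hH.eigenvectorUnitary.2
  have hspec : A = U * diagonal lam * star U := by
    simpa using hH.spectral_theorem
  set d : Fin p → ℝ := fun i => t * lam i - z with hd
  have hd0 : ∀ i, 0 < d i := fun i => by
    have := hlam0 i; simp only [hd]; nlinarith
  have hdiag : diagonal d = t • diagonal lam - z • 1 := by
    ext i j
    rcases eq_or_ne i j with h | h <;> simp [h, hd, Matrix.one_apply, mul_comm]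
  have hM : t • A - z • 1 = U * diagonal d * star U := by
    rw [hdiag, hspec]
    simp only [Matrix.mul_sub, Matrix.sub_mul, Matrix.mul_smul, Matrix.smul_mul,
      Matrix.mul_one, hU1]
  have hMinv : (t • A - z • 1)⁻¹ = U * diagonal (fun i => (d i)⁻¹) * star U := by
    rw [hM]
    apply Matrix.inv_eq_left_inv
    calc U * diagonal (fun i => (d i)⁻¹) * star U * (U * diagonal d * star U)
        = U * (diagonal (fun i => (d i)⁻¹) * (star U * U) * diagonal d) * star U := by
          noncomm_ring
      _ = 1 := by
          rw [hU2, mul_one, diagonal_mul_diagonal]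
          have : (fun i => (d i)⁻¹ * d i) = fun _ => (1:ℝ) := by
            funext i; exact inv_mul_cancel₀ (hd0 i).ne'
          rw [this, diagonal_one, mul_one, hU1]
  rw [hMinv]
  conv_lhs => rw [hspec]
  have h3 : U * diagonal (fun i => (d i)⁻¹) * star U * (U * diagonal lam * star U)
      = U * (diagonal fun i => (d i)⁻¹ * lam i) * star U := by
    calc U * diagonal (fun i => (d i)⁻¹) * star U * (U * diagonal lam * star U)
        = U * (diagonal (fun i => (d i)⁻¹) * (star U * U) * diagonal lam) * star U := by
          noncomm_ring
      _ = _ := by rw [hU2, mul_one, diagonal_mul_diagonal]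
  rw [h3, Matrix.trace_mul_cycle, hU2, Matrix.one_mul, Matrix.trace_diagonal]

/-- For `Σ` symmetric psd with `‖Σ‖_op ≤ 1`, `γ = p/n`, `z < 0` and
`F(l) = z + (z/n)·Tr(((z/l)·Σ − z·I)⁻¹·Σ)`, one has `z − γ ≤ F(l) ≤ z ≤ 0` for every
`l ≤ z`; in particular any fixed point `c ≤ z` of `F` satisfies `1 ≤ c/z ≤ 1 + γ/|z|`. -/
theorem fixed_point_function_range_real
    {p : ℕ} (n : ℕ) (hn : 1 ≤ n) (A : Matrix (Fin p) (Fin p) ℝ)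
    (hA : A.PosSemidef) (hAop : opNorm A ≤ 1)
    (z : ℝ) (hz : z < 0)
    (γ : ℝ) (hγ : γ = (p : ℝ) / n)
    (F : ℝ → ℝ) (hF : F = fun l => z + z / n * (((z / l) • A - z • 1)⁻¹ * A).trace) :
    (∀ l : ℝ, l ≤ z → z - γ ≤ F l ∧ F l ≤ z ∧ z ≤ 0) ∧
    (∀ c : ℝ, c ≤ z → F c = c → 1 ≤ c / z ∧ c / z ≤ 1 + γ / |z|) := by
  have hn0 : (0 : ℝ) < n := by exact_mod_cast hn
  have hH := hA.1
  have hlam0 : ∀ i, 0 ≤ hH.eigenvalues i := hA.eigenvalues_nonneg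
  have hlam1 : ∀ i, hH.eigenvalues i ≤ 1 := by
    intro i
    have hv : ‖(hH.eigenvectorBasis i : EuclideanSpace ℝ (Fin p))‖ = 1 :=
      hH.eigenvectorBasis.orthonormal.1 i
    have h1 : Matrix.toEuclideanLin A (hH.eigenvectorBasis i)
        = hH.eigenvalues i • (hH.eigenvectorBasis i : EuclideanSpace ℝ (Fin p)) := by
      apply (WithLp.equiv 2 (Fin p → ℝ)).injective
      simp [Matrix.toEuclideanLin_apply, hH.mulVec_eigenvectorBasis]
    have h2 := (LinearMap.toContinuousLinearMap (Matrix.toEuclideanLin A)).le_opNorm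
      (hH.eigenvectorBasis i)
    rw [LinearMap.coe_toContinuousLinearMap'] at h2
    rw [h1, norm_smul, hv, Real.norm_eq_abs] at h2
    rw [mul_one, mul_one] at h2
    calc hH.eigenvalues i ≤ |hH.eigenvalues i| := le_abs_self _
      _ ≤ 1 := le_trans h2 hAop
  -- main bounds
  have key : ∀ l : ℝ, l ≤ z → z - γ ≤ F l ∧ F l ≤ z ∧ z ≤ 0 := by
    intro l hl
    have hl0 : l < 0 := lt_of_le_of_lt hl hz
    have ht : 0 < z / l := div_pos_of_neg_of_neg hz hl0
    have htr := trace_resolvent_eq A hH (z / l) z hz ht hlam0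
    set S := ∑ i, ((z / l) * hH.eigenvalues i - z)⁻¹ * hH.eigenvalues i with hS
    have hS0 : 0 ≤ S := by
      apply Finset.sum_nonneg
      intro i _
      have := hlam0 i
      have hdi : 0 < (z / l) * hH.eigenvalues i - z := by nlinarith
      positivity
    have hSle : S ≤ p * (-z)⁻¹ := by
      rw [hS]
      calc ∑ i, ((z / l) * hH.eigenvalues i - z)⁻¹ * hH.eigenvalues i
          ≤ ∑ _i : Fin p, (-z)⁻¹ := by
            apply Finset.sum_le_sum
            intro i _
            have h0 := hlam0 i
            have h1 := hlam1 i
            have hdi : -z ≤ (z / l) * hH.eigenvalues i - z := by nlinarith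
            have hzpos : (0:ℝ) < -z := by linarith
            calc ((z / l) * hH.eigenvalues i - z)⁻¹ * hH.eigenvalues i
                ≤ (-z)⁻¹ * 1 := by
                  apply mul_le_mul _ h1 h0 (by positivity)
                  exact inv_anti₀ hzpos hdi
              _ = (-z)⁻¹ := mul_one _
      _ = p * (-z)⁻¹ := by rw [Finset.sum_const, Finset.card_univ]; simp [mul_comm]
    have hFl : F l = z + z / n * S := by rw [hF]; simp only; rw [htr]
    have hzn : z / n < 0 := div_neg_of_neg_of_pos hz hn0
    refine ⟨?_, ?_, le_of_lt hz⟩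
    · -- z - γ ≤ F l
      rw [hFl, hγ]
      have h4 : z / n * S ≥ z / n * (p * (-z)⁻¹) :=
        mul_le_mul_of_nonpos_left hSle (le_of_lt hzn)
      have hzne : z ≠ 0 := ne_of_lt hz
      have hnne : (n:ℝ) ≠ 0 := ne_of_gt hn0
      have h5 : z / n * ((p:ℝ) * (-z)⁻¹) = -((p:ℝ) / n) := by
        field_simp
      linarith [h4, h5 ▸ h4]
    · rw [hFl]
      nlinarith
  refine ⟨key, ?_⟩
  intro c hc hFc
  obtain ⟨h1, h2, _⟩ := key c hc
  rw [hFc] at h1 h2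
  have hγ0 : 0 ≤ γ := by rw [hγ]; positivity
  have habs : |z| = -z := abs_of_neg hz
  constructor
  · rw [le_div_iff_of_neg hz, one_mul]; exact h2
  · rw [div_le_iff_of_neg hz, habs]
    have hzne : z ≠ 0 := ne_of_lt hz
    have : (1 + γ / -z) * z = z - γ := by
      rw [div_neg, add_mul, one_mul, neg_mul, div_mul_cancel₀ _ hzne]
      ring
    rw [this]; exact h1
end

section
/- Let Σ be a real symmetric positive semidefinite p×p matrix with ‖Σ‖_op ≤ 1, let n ≥ 1, set γ = p/n, let z < 0 be real, and define F(l) = z + (z/n)·Tr(((z/l)·Σ − z·I_p)⁻¹·Σ) for l ≤ z. Suppose c ≤ z satisfies F(c) = c. Then for every l ≤ z one has |F(c) − F(l)| ≤ k·|c − l| with k = γ/((1 + |z|)·(γ + |z|)), and k < 1. -/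
set_option maxHeartbeats 1000000
set_option synthInstance.maxHeartbeats 1000000

open Matrix

/-- Eigenvalues are bounded by the operator norm. -/
theorem aux_eig_le_one {p : ℕ} (A : Matrix (Fin p) (Fin p) ℝ) (hA : A.PosSemidef)
    (hAop : opNorm A ≤ 1) (i : Fin p) : hA.1.eigenvalues i ≤ 1 := by
  have hv : ‖hA.1.eigenvectorBasis i‖ = 1 := hA.1.eigenvectorBasis.orthonormal.1 i
  have happ : Matrix.toEuclideanLin A (hA.1.eigenvectorBasis i)
      = hA.1.eigenvalues i • (hA.1.eigenvectorBasis i) := by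
    apply (WithLp.equiv 2 _).injective
    simp [Matrix.piLp_ofLp_toEuclideanLin, Matrix.toEuclideanLin_apply,
      hA.1.mulVec_eigenvectorBasis i]
  have hle := (LinearMap.toContinuousLinearMap (Matrix.toEuclideanLin A)).le_opNorm
    (hA.1.eigenvectorBasis i)
  rw [LinearMap.coe_toContinuousLinearMap', happ] at hle
  rw [norm_smul, hv, Real.norm_eq_abs] at hle
  have h2 : |hA.1.eigenvalues i| ≤ opNorm A := by simpa [opNorm] using hle
  calc hA.1.eigenvalues i ≤ |hA.1.eigenvalues i| := le_abs_self _
    _ ≤ 1 := le_trans h2 hAop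

/-- Trace of `M⁻¹ * A` when `M` is diagonalized in the eigenbasis of `A`. -/
theorem aux_trace {p : ℕ} (A : Matrix (Fin p) (Fin p) ℝ) (hA : A.PosSemidef)
    (d : Fin p → ℝ) (hd : ∀ i, d i ≠ 0)
    (M : Matrix (Fin p) (Fin p) ℝ)
    (hM : M = (hA.1.eigenvectorUnitary : Matrix (Fin p) (Fin p) ℝ) * diagonal d
      * star (hA.1.eigenvectorUnitary : Matrix (Fin p) (Fin p) ℝ)) :
    (M⁻¹ * A).trace = ∑ i, (d i)⁻¹ * hA.1.eigenvalues i := by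
  set U : Matrix (Fin p) (Fin p) ℝ := (hA.1.eigenvectorUnitary : Matrix (Fin p) (Fin p) ℝ)
  have hU1 : U * star U = 1 := (Matrix.mem_unitaryGroup_iff).mp hA.1.eigenvectorUnitary.2
  have hU2 : star U * U = 1 := (Matrix.mem_unitaryGroup_iff').mp hA.1.eigenvectorUnitary.2
  have hspec : A = U * diagonal hA.1.eigenvalues * star U := by
    have := hA.1.spectral_theorem; simpa using this
  have hinv : M⁻¹ = U * diagonal (fun i => (d i)⁻¹) * star U := by
    apply inv_eq_right_inv
    rw [hM]
    calc U * diagonal d * star U * (U * diagonal (fun i => (d i)⁻¹) * star U)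
        = U * (diagonal d * (star U * U) * diagonal (fun i => (d i)⁻¹)) * star U := by
          noncomm_ring
      _ = 1 := by
          rw [hU2, mul_one, diagonal_mul_diagonal]
          have : (fun i => d i * (d i)⁻¹) = fun _ => (1:ℝ) := by
            funext i; exact mul_inv_cancel₀ (hd i)
          rw [this, diagonal_one, mul_one, hU1]
  have hprod : M⁻¹ * A
      = U * (diagonal (fun i => (d i)⁻¹) * diagonal hA.1.eigenvalues) * star U := by
    rw [hinv]
    conv_lhs => rw [hspec]
    simp only [mul_assoc]
    rw [← mul_assoc (star U) U, hU2, one_mul]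
  rw [hprod, diagonal_mul_diagonal, trace_mul_cycle, hU2, one_mul, trace_diagonal]

/-- In the real case, the map `F(l) = z + (z/n)·Tr(((z/l)·Σ − z·I)⁻¹·Σ)`
is a contraction around its fixed point `c`: for every `l ≤ z`,
`|F(c) − F(l)| ≤ k·|c − l|` with `k = γ/((1+|z|)·(γ+|z|)) < 1`. -/
theorem fixed_point_contraction_real
    {p : ℕ} (n : ℕ) (hn : 1 ≤ n) (A : Matrix (Fin p) (Fin p) ℝ)
    (hA : A.PosSemidef) (hAop : opNorm A ≤ 1)
    (z : ℝ) (hz : z < 0)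
    (γ : ℝ) (hγ : γ = (p : ℝ) / n)
    (F : ℝ → ℝ) (hF : F = fun l => z + z / n * (((z / l) • A - z • 1)⁻¹ * A).trace)
    (c : ℝ) (hc : c ≤ z) (hfix : F c = c)
    (k : ℝ) (hk : k = γ / ((1 + |z|) * (γ + |z|))) :
    (∀ l : ℝ, l ≤ z → |F c - F l| ≤ k * |c - l|) ∧ k < 1 := by
  have hn' : (0:ℝ) < n := by exact_mod_cast Nat.lt_of_lt_of_le Nat.zero_lt_one hn
  have habs : |z| = -z := abs_of_neg hz
  have hγ0 : 0 ≤ γ := by rw [hγ]; positivity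
  set lam : Fin p → ℝ := hA.1.eigenvalues with hlamdef
  have hlam0 : ∀ i, 0 ≤ lam i := fun i => hA.eigenvalues_nonneg i
  have hlam1 : ∀ i, lam i ≤ 1 := fun i => aux_eig_le_one A hA hAop i
  have hden : ∀ x : ℝ, x ≤ z → ∀ i, 0 < lam i - x := by
    intro x hx i; have := hlam0 i; linarith
  -- key formula for F
  have key : ∀ l : ℝ, l ≤ z → F l = z + (∑ i, l * lam i / (lam i - l)) / n := by
    intro l hl
    have hl0 : l < 0 := lt_of_le_of_lt hl hz
    have hd : ∀ i, z / l * lam i - z ≠ 0 := by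
      intro i
      have hzl : 0 < z / l := div_pos_iff.mpr (Or.inr ⟨hz, hl0⟩)
      have := mul_nonneg hzl.le (hlam0 i)
      nlinarith
    set U : Matrix (Fin p) (Fin p) ℝ := (hA.1.eigenvectorUnitary : Matrix (Fin p) (Fin p) ℝ)
    have hU1 : U * star U = 1 := (Matrix.mem_unitaryGroup_iff).mp hA.1.eigenvectorUnitary.2
    have hspec : A = U * diagonal lam * star U := by
      have := hA.1.spectral_theorem; simpa using this
    have hdd : diagonal (fun i => z / l * lam i - z)
        = (z/l) • diagonal lam - z • (1 : Matrix (Fin p) (Fin p) ℝ) := by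
      ext i j
      rcases eq_or_ne i j with h|h
      · subst h; simp [Matrix.diagonal_apply_eq, Matrix.one_apply_eq]
      · simp [Matrix.diagonal_apply_ne _ h, Matrix.one_apply_ne h]
    have hM : (z / l) • A - z • (1 : Matrix (Fin p) (Fin p) ℝ)
        = U * diagonal (fun i => z / l * lam i - z) * star U := by
      rw [hdd]
      conv_lhs => rw [hspec]
      rw [Matrix.mul_sub, Matrix.sub_mul, Matrix.mul_smul, Matrix.smul_mul, Matrix.mul_smul,
        Matrix.smul_mul, Matrix.mul_one, hU1]
    have htr := aux_trace A hA (fun i => z / l * lam i - z) hd _ hM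
    rw [hF]
    simp only
    rw [hM] at htr ⊢
    rw [htr, Finset.mul_sum, Finset.sum_div]
    congr 1
    apply Finset.sum_congr rfl
    intro i _
    have h1 : lam i - l ≠ 0 := ne_of_gt (hden l hl i)
    have hll : l ≠ 0 := ne_of_lt hl0
    have hrw : z / l * lam i - z = z * (lam i - l) / l := by field_simp
    show z / (n:ℝ) * ((z / l * lam i - z)⁻¹ * lam i) = l * lam i / (lam i - l) / (n:ℝ)
    have hd1 : (n:ℝ) * (z * (lam i - l)) ≠ 0 := by
      apply mul_ne_zero hn'.ne'
      exact mul_ne_zero hz.ne (sub_ne_zero.mpr (fun h => h1 (by rw [h]; ring)))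
    have hd2 : (lam i - l) * (n:ℝ) ≠ 0 := mul_ne_zero h1 hn'.ne'
    have h3 : z * (lam i - l) ≠ 0 := mul_ne_zero hz.ne h1
    rw [hrw, inv_div]
    field_simp [h3, hn'.ne', hz.ne]
  -- the fixed point gives information about S
  set S : ℝ := (∑ i, lam i / (lam i - c)) / n with hSdef
  have hsumc : ∑ i, c * lam i / (lam i - c) = c * ∑ i, lam i / (lam i - c) := by
    rw [Finset.mul_sum]
    exact Finset.sum_congr rfl (fun i _ => by rw [mul_div_assoc])
  have hfixc : c = z + c * S := by
    conv_lhs => rw [← hfix, key c hc]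
    rw [hsumc, mul_div_assoc, hSdef]
  have hS0 : 0 ≤ S := by
    apply div_nonneg _ hn'.le
    apply Finset.sum_nonneg
    intro i _
    exact div_nonneg (hlam0 i) (hden c hc i).le
  have hc0 : c < 0 := lt_of_le_of_lt hc hz
  have h1c : (0:ℝ) < 1 - c := by linarith
  have hS1c : S * (1 - c) ≤ γ := by
    have hsum : ∑ i, lam i / (lam i - c) ≤ (p : ℝ) * (1 / (1 - c)) := by
      calc ∑ i, lam i / (lam i - c) ≤ ∑ _i : Fin p, 1 / (1 - c) := by
            apply Finset.sum_le_sum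
            intro i _
            rw [div_le_div_iff₀ (hden c hc i) h1c]
            nlinarith [hlam0 i, hlam1 i]
        _ = (p : ℝ) * (1 / (1 - c)) := by simp [Finset.sum_const, mul_comm]
    have : S ≤ ((p : ℝ) * (1 / (1 - c))) / n := by
      rw [hSdef]; gcongr
    have h2 : ((p : ℝ) * (1 / (1 - c))) / n = (γ / (1 - c)) := by
      rw [hγ]; ring
    rw [h2] at this
    calc S * (1 - c) ≤ (γ / (1 - c)) * (1 - c) := by gcongr
      _ = γ := by field_simp
  have hcs : c * S = c - z := by linarith
  have hS_lt1 : S < 1 := by nlinarith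
  have hSk : S * (γ + |z|) ≤ γ := by
    rw [habs]
    have h1 : (0:ℝ) ≤ 1 - S := by linarith
    have h2 : 0 ≤ γ + S * c := by nlinarith
    have h4 : S * z = S * c - S * (c * S) := by
      rw [show z = c - c * S by linarith]; ring
    nlinarith [mul_nonneg h1 h2]
  have hzabs : (0:ℝ) < |z| := abs_pos.mpr hz.ne
  have hk1 : 0 < 1 + |z| := by linarith
  have hkden : 0 < (1 + |z|) * (γ + |z|) := by positivity
  constructor
  · intro l hl
    have hl0 : l < 0 := lt_of_le_of_lt hl hz
    set T : ℝ := (∑ i, lam i ^ 2 / ((lam i - c) * (lam i - l))) / n with hTdef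
    have hdiff : F c - F l = (c - l) * T := by
      rw [key c hc, key l hl]
      have : (z + (∑ i, c * lam i / (lam i - c)) / n) - (z + (∑ i, l * lam i / (lam i - l)) / n)
          = (∑ i, (c * lam i / (lam i - c) - l * lam i / (lam i - l))) / n := by
        rw [Finset.sum_sub_distrib]; ring
      have hterms : ∑ i, (c * lam i / (lam i - c) - l * lam i / (lam i - l))
          = ∑ i, (c - l) * (lam i ^ 2 / ((lam i - c) * (lam i - l))) := by
        apply Finset.sum_congr rfl
        intro i _
        have h1 : lam i - c ≠ 0 := ne_of_gt (hden c hc i)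
        have h2 : lam i - l ≠ 0 := ne_of_gt (hden l hl i)
        field_simp
        ring
      rw [this, hterms, ← Finset.mul_sum, hTdef, mul_div_assoc]
    have hT0 : 0 ≤ T := by
      apply div_nonneg _ hn'.le
      apply Finset.sum_nonneg
      intro i _
      exact div_nonneg (sq_nonneg _) (mul_nonneg (hden c hc i).le (hden l hl i).le)
    have hTS : T ≤ (1 / (1 + |z|)) * S := by
      have hstep1 : ∑ i, lam i ^ 2 / ((lam i - c) * (lam i - l))
          ≤ ∑ i, (1 / (1 + |z|)) * (lam i / (lam i - c)) := by
        apply Finset.sum_le_sum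
        intro i _
        have h1 : 0 < lam i - c := hden c hc i
        have h2 : 0 < lam i - l := hden l hl i
        have hstep : lam i / (lam i - l) ≤ 1 / (1 + |z|) := by
          rw [div_le_div_iff₀ h2 hk1, habs]
          nlinarith [hlam0 i, hlam1 i]
        calc lam i ^ 2 / ((lam i - c) * (lam i - l))
            = (lam i / (lam i - l)) * (lam i / (lam i - c)) := by
              rw [div_mul_div_comm]; ring_nf
          _ ≤ (1 / (1 + |z|)) * (lam i / (lam i - c)) := by
              gcongr
              exact div_nonneg (hlam0 i) h1.le
      rw [hTdef, hSdef]
      calc (∑ i, lam i ^ 2 / ((lam i - c) * (lam i - l))) / (n:ℝ)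
          ≤ (∑ i, (1 / (1 + |z|)) * (lam i / (lam i - c))) / (n:ℝ) := by gcongr
        _ = (1 / (1 + |z|)) * ((∑ i, lam i / (lam i - c)) / (n:ℝ)) := by
            rw [← Finset.mul_sum, mul_div_assoc]
    have hTk : T ≤ k := by
      have hSγ : S ≤ γ / (γ + |z|) := by
        rw [le_div_iff₀ (by positivity)]
        exact hSk
      calc T ≤ (1 / (1 + |z|)) * S := hTS
        _ ≤ (1 / (1 + |z|)) * (γ / (γ + |z|)) := by gcongr
        _ = k := by rw [hk]; field_simp
    calc |F c - F l| = |c - l| * T := by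
          rw [hdiff, abs_mul, abs_of_nonneg hT0]
      _ ≤ |c - l| * k := by gcongr
      _ = k * |c - l| := mul_comm _ _
  · rw [hk, div_lt_one hkden]
    nlinarith
end

section
/- Let Σ be a real symmetric positive semidefinite p×p matrix with ‖Σ‖_op ≤ 1, let n ≥ 1, set γ = p/n, let z ∈ ℂ with Im(z) > 0 and η = 1/Im(z), and define F(l) = z + (z/n)·Tr(((z/l)·Σ − z·I_p)⁻¹·Σ) for l ∈ Ω = {l ∈ ℂ : Im(l) ≥ Im(z) and Im(l/z) ≥ 0}. Then for all l, l' ∈ Ω, F(l) and F(l') have positive imaginary part and d(F(l), F(l')) ≤ k·d(l, l'), where d(ω₁, ω₂) = |ω₁ − ω₂|/(Im(ω₁)^{1/2}·Im(ω₂)^{1/2}) and k = γ·|z|·η²/(1 + γ·|z|·η²) < 1. -/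
open Matrix

/-- The semi-metric `d(ω₁, ω₂) = |ω₁ − ω₂|/(Im(ω₁)^(1/2)·Im(ω₂)^(1/2))` on the upper
half-plane. -/
noncomputable def dUpper (ω₁ ω₂ : ℂ) : ℝ :=
  ‖ω₁ - ω₂‖ / (Real.sqrt ω₁.im * Real.sqrt ω₂.im)


/-- Imaginary part of the per-eigenvalue term. -/
lemma fpc_im_term (μ : ℝ) (l : ℂ) (hl : 0 < l.im) :
    ((μ : ℂ) * l / ((μ:ℂ) - l)).im = μ^2 * l.im / Complex.normSq ((μ:ℂ) - l) := by
  have hns : Complex.normSq ((μ:ℂ) - l) ≠ 0 := by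
    intro h
    have := Complex.normSq_eq_zero.mp h
    have : ((μ:ℂ) - l).im = 0 := by rw [this]; simp
    simp [Complex.sub_im] at this
    exact hl.ne' this
  rw [Complex.div_im]
  field_simp [Complex.mul_im, Complex.mul_re, Complex.sub_re, Complex.sub_im]
  simp only [Complex.mul_im, Complex.mul_re, Complex.sub_re, Complex.sub_im, Complex.ofReal_re, Complex.ofReal_im]
  ring

/-- Algebraic identity for the difference of terms. -/
lemma fpc_diff_term (μ : ℝ) (l l' : ℂ) (h1 : (μ:ℂ) - l ≠ 0) (h2 : (μ:ℂ) - l' ≠ 0) :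
    (μ:ℂ)*l/((μ:ℂ)-l) - (μ:ℂ)*l'/((μ:ℂ)-l') = (μ:ℂ)^2 * (l - l')/(((μ:ℂ)-l)*((μ:ℂ)-l')) := by
  field_simp
  ring

/-- Cone geometry: `μ·Im z ≤ |z|·|μ − l|` when `Im(l/z) ≥ 0`. -/
lemma fpc_geom (μ : ℝ) (hμ0 : 0 ≤ μ) (z l : ℂ) (hz : 0 < z.im)
    (hc : 0 ≤ (l / z).im) :
    μ * z.im ≤ ‖z‖ * ‖(μ:ℂ) - l‖ := by
  have hzne : z ≠ 0 := by
    intro h; rw [h] at hz; simp at hz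
  have hns : 0 < Complex.normSq z := Complex.normSq_pos.mpr hzne
  have h1 : 0 ≤ l.im * z.re - l.re * z.im := by
    rw [Complex.div_im, div_sub_div_same, le_div_iff₀ hns, zero_mul] at hc
    exact hc
  set w := ((μ:ℂ) - l) * (starRingEnd ℂ) z with hw
  have hwim : w.im = -(μ * z.im) - (l.im * z.re - l.re * z.im) := by
    simp [hw, Complex.mul_im, Complex.sub_re, Complex.sub_im]
    ring
  have h2 : μ * z.im ≤ |w.im| := by
    rw [hwim]
    rw [abs_of_nonpos (by nlinarith)]
    nlinarith
  calc μ * z.im ≤ |w.im| := h2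
    _ ≤ ‖w‖ := Complex.abs_im_le_norm w
    _ = ‖(μ:ℂ) - l‖ * ‖z‖ := by
        rw [hw, norm_mul, Complex.norm_conj]
    _ = ‖z‖ * ‖(μ:ℂ) - l‖ := mul_comm _ _

/-- Per-term bound on normalized imaginary parts. -/
lemma fpc_term_bound (μ : ℝ) (hμ0 : 0 ≤ μ) (hμ1 : μ ≤ 1) (z l : ℂ) (hz : 0 < z.im)
    (hl : z.im ≤ l.im) (hc : 0 ≤ (l / z).im) :
    μ^2 * l.im / Complex.normSq ((μ:ℂ) - l) ≤ ‖z‖ / z.im := by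
  have hlim : 0 < l.im := lt_of_lt_of_le hz hl
  set r := ‖(μ:ℂ) - l‖ with hr
  have hr0 : 0 < r := by
    rw [hr]
    apply norm_pos_iff.mpr
    intro h
    have : ((μ:ℂ) - l).im = 0 := by rw [h]; simp
    simp [Complex.sub_im] at this
    exact hlim.ne' this
  have h1 : l.im ≤ r := by
    have h := Complex.abs_im_le_norm ((μ:ℂ) - l)
    rw [Complex.sub_im, Complex.ofReal_im, zero_sub, abs_neg, abs_of_pos hlim] at h
    exact h
  have h2 : μ * z.im ≤ ‖z‖ * r := fpc_geom μ hμ0 z l hz hc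
  have hns : Complex.normSq ((μ:ℂ) - l) = r^2 := (Complex.sq_norm _).symm
  rw [hns, div_le_div_iff₀ (by positivity) hz]
  have habs : (0:ℝ) ≤ ‖z‖ := norm_nonneg z
  have key : (μ * z.im) * l.im ≤ (‖z‖ * r) * r :=
    mul_le_mul h2 h1 hlim.le (mul_nonneg habs hr0.le)
  nlinarith [key, pow_two r, mul_nonneg (mul_nonneg (mul_nonneg hμ0 (sub_nonneg.mpr hμ1)) hz.le) hlim.le]

lemma fpc_key {p : ℕ} (n : ℕ) (hn : 1 ≤ n) (A : Matrix (Fin p) (Fin p) ℝ) (hH : A.IsHermitian)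
    (z : ℂ) (hz : 0 < z.im) (l : ℂ) (hl : z.im ≤ l.im) :
    z + z / (n : ℂ) *
      (((z / l) • A.map (fun a => (a : ℂ)) - z • 1)⁻¹ * A.map (fun a => (a : ℂ))).trace
    = z + ((1/(n:ℝ) : ℝ) : ℂ) *
        ∑ i, (hH.eigenvalues i : ℂ) * l / ((hH.eigenvalues i : ℂ) - l) := by
  classical
  set lam := hH.eigenvalues with hlam
  have hlim : 0 < l.im := hz.trans_le hl
  have hlne : l ≠ 0 := fun h => by simp [h] at hlim
  have hzne : z ≠ 0 := fun h => by simp [h] at hz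
  have hnne : (n:ℂ) ≠ 0 := Nat.cast_ne_zero.mpr (by omega)
  have hsub : ∀ i, (lam i : ℂ) - l ≠ 0 := by
    intro i h
    have h2 : ((lam i:ℂ) - l).im = 0 := by rw [h]; rfl
    rw [Complex.sub_im, Complex.ofReal_im, zero_sub, neg_eq_zero] at h2
    exact hlim.ne' h2
  set d : Fin p → ℂ := fun i => z / l * (lam i : ℂ) - z with hd
  have hdeq : ∀ i, d i = z * ((lam i : ℂ) - l) / l := by
    intro i; rw [hd]; field_simp
  have hdne : ∀ i, d i ≠ 0 := by
    intro i
    rw [hdeq i]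
    exact div_ne_zero (mul_ne_zero hzne (hsub i)) hlne
  set φ : Matrix (Fin p) (Fin p) ℝ →+* Matrix (Fin p) (Fin p) ℂ :=
    Complex.ofRealHom.mapMatrix with hφdef
  have hφ : ∀ M : Matrix (Fin p) (Fin p) ℝ, M.map (fun a => (a:ℂ)) = φ M := fun _ => rfl
  set U : Matrix (Fin p) (Fin p) ℝ := (hH.eigenvectorUnitary : Matrix (Fin p) (Fin p) ℝ) with hU
  have hUmem := hH.eigenvectorUnitary.2
  have hU1 : U * star U = 1 := (Matrix.mem_unitaryGroup_iff).mp hUmem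
  have hU2 : star U * U = 1 := (Matrix.mem_unitaryGroup_iff').mp hUmem
  set V : Matrix (Fin p) (Fin p) ℂ := φ U with hV
  have hVH : Vᴴ = φ (star U) := by
    rw [star_eq_conjTranspose]
    exact (Matrix.conjTranspose_map (fun a : ℝ => (a:ℂ))
      (fun x => (Complex.conj_ofReal x).symm)).symm
  have hV1 : V * Vᴴ = 1 := by rw [hVH, hV, ← _root_.map_mul, hU1, _root_.map_one]
  have hV2 : Vᴴ * V = 1 := by rw [hVH, hV, ← _root_.map_mul, hU2, _root_.map_one]
  have hdiagmap : ∀ e : Fin p → ℝ,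
      φ (Matrix.diagonal e) = Matrix.diagonal (fun i => (e i : ℂ)) := by
    intro e
    show (Matrix.diagonal e).map (fun a : ℝ => (a:ℂ)) = _
    rw [Matrix.diagonal_map (by simp)]
  have hBspec : A.map (fun a => (a:ℂ)) = V * Matrix.diagonal (fun i => (lam i:ℂ)) * Vᴴ := by
    conv_lhs => rw [hH.spectral_theorem, Unitary.conjStarAlgAut_apply]
    rw [hφ, _root_.map_mul, _root_.map_mul, hVH, ← hV]
    congr 1
    rw [hdiagmap]
    congr 1
  have hdiagd : Matrix.diagonal d
      = (z/l) • Matrix.diagonal (fun i => (lam i:ℂ)) - z • (1 : Matrix (Fin p) (Fin p) ℂ) := by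
    ext i j
    rcases eq_or_ne i j with rfl | hij
    · simp [hd]
    · simp [Matrix.diagonal_apply_ne _ hij, Matrix.one_apply_ne hij]
  have hM : (z / l) • A.map (fun a => (a : ℂ)) - z • 1 = V * Matrix.diagonal d * Vᴴ := by
    rw [hdiagd, Matrix.mul_sub, Matrix.sub_mul, mul_smul_comm, mul_smul_comm,
      Matrix.smul_mul, Matrix.smul_mul, Matrix.mul_one, hV1, hBspec]
  have collapse : ∀ e f : Fin p → ℂ,
      (V * Matrix.diagonal e * Vᴴ) * (V * Matrix.diagonal f * Vᴴ)
        = V * Matrix.diagonal (fun i => e i * f i) * Vᴴ := by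
    intro e f
    calc (V * Matrix.diagonal e * Vᴴ) * (V * Matrix.diagonal f * Vᴴ)
        = V * Matrix.diagonal e * (Vᴴ * V) * (Matrix.diagonal f * Vᴴ) := by
          simp only [Matrix.mul_assoc]
      _ = V * (Matrix.diagonal e * Matrix.diagonal f) * Vᴴ := by
          rw [hV2, Matrix.mul_one]; simp only [Matrix.mul_assoc]
      _ = V * Matrix.diagonal (fun i => e i * f i) * Vᴴ := by
          rw [Matrix.diagonal_mul_diagonal]
  have hMinv : ((z / l) • A.map (fun a => (a : ℂ)) - z • 1)⁻¹
      = V * Matrix.diagonal (fun i => (d i)⁻¹) * Vᴴ := by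
    apply Matrix.inv_eq_right_inv
    rw [hM, collapse]
    have : (fun i => d i * (d i)⁻¹) = fun _ => (1:ℂ) := by
      funext i; exact mul_inv_cancel₀ (hdne i)
    rw [this, Matrix.diagonal_one, Matrix.mul_one, hV1]
  have htrace : (((z / l) • A.map (fun a => (a : ℂ)) - z • 1)⁻¹
      * A.map (fun a => (a : ℂ))).trace = ∑ i, (d i)⁻¹ * (lam i : ℂ) := by
    rw [hMinv, hBspec, collapse, Matrix.trace_mul_cycle, hV2, Matrix.one_mul,
      Matrix.trace_diagonal]
  rw [htrace]
  congr 1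
  rw [Finset.mul_sum, Finset.mul_sum]
  apply Finset.sum_congr rfl
  intro i _
  rw [hdeq i, inv_div]
  have hc := hsub i
  have hzc : z * ((lam i : ℂ) - l) ≠ 0 := mul_ne_zero hzne hc
  push_cast
  rw [div_mul_eq_mul_div l, mul_comm (z / (n:ℂ)), div_mul_div_comm, div_mul_div_comm]
  rw [div_eq_div_iff (mul_ne_zero hzc hnne) (mul_ne_zero hnne hc)]
  ring

lemma fpc_eig_le {p : ℕ} (A : Matrix (Fin p) (Fin p) ℝ) (hH : A.IsHermitian) (i : Fin p) :
    |hH.eigenvalues i| ≤ opNorm A := by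
  set v := hH.eigenvectorBasis i with hv
  have hnorm : ‖v‖ = 1 := hH.eigenvectorBasis.orthonormal.1 i
  have hmv : A *ᵥ ⇑v = hH.eigenvalues i • ⇑v := hH.mulVec_eigenvectorBasis i
  have h2 : Matrix.toEuclideanLin A v = hH.eigenvalues i • v := by
    rw [Matrix.toEuclideanLin_apply]
    show (WithLp.equiv 2 (Fin p → ℝ)).symm (A *ᵥ ⇑v) = _
    rw [hmv]
    rfl
  have h3 := (LinearMap.toContinuousLinearMap (Matrix.toEuclideanLin A)).le_opNorm v
  rw [show (LinearMap.toContinuousLinearMap (Matrix.toEuclideanLin A)) v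
      = Matrix.toEuclideanLin A v from rfl, h2, norm_smul, hnorm, mul_one, mul_one] at h3
  have hdef : opNorm A = ‖LinearMap.toContinuousLinearMap (Matrix.toEuclideanLin A)‖ := rfl
  rw [hdef, ← Real.norm_eq_abs]
  exact h3

lemma fpc_scalar (v K a b : ℝ) (hv : 0 < v) (hK : 0 ≤ K) (ha0 : 0 ≤ a) (hb0 : 0 ≤ b)
    (ha : a ≤ K * v) (hb : b ≤ K * v) :
    Real.sqrt (a * b) ≤ (K / (1 + K)) * Real.sqrt ((v + a) * (v + b)) := by
  have hk0 : (0:ℝ) ≤ K / (1+K) := by positivity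
  have h1 : a ≤ (K/(1+K)) * (v + a) := by
    rw [div_mul_eq_mul_div, le_div_iff₀ (by linarith)]
    nlinarith
  have h2 : b ≤ (K/(1+K)) * (v + b) := by
    rw [div_mul_eq_mul_div, le_div_iff₀ (by linarith)]
    nlinarith
  calc Real.sqrt (a*b)
      ≤ Real.sqrt ((K/(1+K)*(v+a)) * (K/(1+K)*(v+b))) :=
        Real.sqrt_le_sqrt (mul_le_mul h1 h2 hb0 (by positivity))
    _ = (K/(1+K)) * Real.sqrt ((v+a)*(v+b)) := by
        rw [show (K/(1+K)*(v+a)) * (K/(1+K)*(v+b)) = (K/(1+K))^2 * ((v+a)*(v+b)) from by ring,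
          Real.sqrt_mul (by positivity), Real.sqrt_sq hk0]

/-- In the complex case, `F(l) = z + (z/n)·Tr(((z/l)·Σ − z·I)⁻¹·Σ)` is a
contraction on `Ω` for the semi-metric `d`, with constant
`k = γ·|z|·η²/(1 + γ·|z|·η²) < 1`, where `η = 1/Im(z)`. -/
theorem fixed_point_contraction_complex
    {p : ℕ} (n : ℕ) (hn : 1 ≤ n) (A : Matrix (Fin p) (Fin p) ℝ)
    (hA : A.PosSemidef) (hAop : opNorm A ≤ 1)
    (z : ℂ) (hz : 0 < z.im)
    (γ η : ℝ) (hγ : γ = (p : ℝ) / n) (hη : η = 1 / z.im)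
    (F : ℂ → ℂ)
    (hF : F = fun l => z + z / (n : ℂ) *
      (((z / l) • A.map (fun a => (a : ℂ)) - z • 1)⁻¹ * A.map (fun a => (a : ℂ))).trace)
    (k : ℝ) (hk : k = γ * ‖z‖ * η ^ 2 / (1 + γ * ‖z‖ * η ^ 2)) :
    k < 1 ∧
    ∀ l l' : ℂ, z.im ≤ l.im → 0 ≤ (l / z).im → z.im ≤ l'.im → 0 ≤ (l' / z).im →
      0 < (F l).im ∧ 0 < (F l').im ∧ dUpper (F l) (F l') ≤ k * dUpper l l' := by
  have hn0 : (0:ℝ) < n := by exact_mod_cast Nat.lt_of_lt_of_le Nat.zero_lt_one hn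
  set K : ℝ := γ * ‖z‖ * η ^ 2 with hKdef
  have hγ0 : 0 ≤ γ := by rw [hγ]; positivity
  have hK0 : 0 ≤ K := by rw [hKdef]; positivity
  constructor
  · rw [hk, div_lt_one (by linarith)]
    linarith
  intro l l' hl hcl hl' hcl'
  have hH := hA.1
  set lam := hH.eigenvalues with hlam
  have hlam0 : ∀ i, 0 ≤ lam i := fun i => hA.eigenvalues_nonneg i
  have hlam1 : ∀ i, lam i ≤ 1 :=
    fun i => le_trans (le_trans (le_abs_self _) (fpc_eig_le A hH i)) hAop
  set v := z.im with hv
  have hlim : 0 < l.im := hz.trans_le hl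
  have hlim' : 0 < l'.im := hz.trans_le hl'
  -- the sum S
  set S : ℂ → ℝ := fun w => ∑ i, (lam i)^2 * w.im / Complex.normSq ((lam i:ℂ) - w) with hS
  have hFim : ∀ w : ℂ, z.im ≤ w.im → (F w).im = v + (1/(n:ℝ)) * S w := by
    intro w hw
    have hwim : 0 < w.im := hz.trans_le hw
    rw [hF]
    simp only
    rw [fpc_key n hn A hH z hz w hw, Complex.add_im, Complex.im_ofReal_mul, Complex.im_sum]
    congr 1
    rw [hS]
    simp only
    congr 1
    apply Finset.sum_congr rfl
    intro i _
    exact fpc_im_term (lam i) w hwim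
  have hS0 : ∀ w : ℂ, 0 < w.im → 0 ≤ S w := by
    intro w hw
    apply Finset.sum_nonneg
    intro i _
    exact div_nonneg (mul_nonneg (sq_nonneg _) hw.le) (Complex.normSq_nonneg _)
  have hSbound : ∀ w : ℂ, z.im ≤ w.im → 0 ≤ (w/z).im → S w ≤ p * (‖z‖ / v) := by
    intro w hw hc
    calc S w ≤ ∑ _i : Fin p, ‖z‖ / v := by
          apply Finset.sum_le_sum
          intro i _
          exact fpc_term_bound (lam i) (hlam0 i) (hlam1 i) z w hz hw hc
      _ = p * (‖z‖ / v) := by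
          rw [Finset.sum_const, Finset.card_univ, Fintype.card_fin, nsmul_eq_mul]
  set a : ℝ := (1/(n:ℝ)) * S l with hadef
  set a' : ℝ := (1/(n:ℝ)) * S l' with ha'def
  have hKv : K * v = γ * ‖z‖ / v := by
    rw [hKdef, hη]
    field_simp
  have ha0 : 0 ≤ a := mul_nonneg (by positivity) (hS0 l hlim)
  have ha'0 : 0 ≤ a' := mul_nonneg (by positivity) (hS0 l' hlim')
  have hrw : (p:ℝ)/n * ‖z‖ / v = 1/n * ((p:ℝ) * (‖z‖ / v)) := by ring
  have haK : a ≤ K * v := by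
    rw [hKv, hadef, hγ, hrw]
    exact mul_le_mul_of_nonneg_left (hSbound l hl hcl) (by positivity)
  have ha'K : a' ≤ K * v := by
    rw [hKv, ha'def, hγ, hrw]
    exact mul_le_mul_of_nonneg_left (hSbound l' hl' hcl') (by positivity)
  have hFiml : (F l).im = v + a := hFim l hl
  have hFiml' : (F l').im = v + a' := hFim l' hl'
  have hFpos : 0 < (F l).im := by rw [hFiml]; linarith
  have hFpos' : 0 < (F l').im := by rw [hFiml']; linarith
  refine ⟨hFpos, hFpos', ?_⟩
  -- nonvanishing denominators
  have hsub : ∀ i, ((lam i:ℂ) - l) ≠ 0 := by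
    intro i h
    have h2 : ((lam i:ℂ) - l).im = 0 := by rw [h]; rfl
    rw [Complex.sub_im, Complex.ofReal_im, zero_sub, neg_eq_zero] at h2
    exact hlim.ne' h2
  have hsub' : ∀ i, ((lam i:ℂ) - l') ≠ 0 := by
    intro i h
    have h2 : ((lam i:ℂ) - l').im = 0 := by rw [h]; rfl
    rw [Complex.sub_im, Complex.ofReal_im, zero_sub, neg_eq_zero] at h2
    exact hlim'.ne' h2
  set r : Fin p → ℝ := fun i => ‖(lam i:ℂ) - l‖ with hrdef
  set r' : Fin p → ℝ := fun i => ‖(lam i:ℂ) - l'‖ with hr'def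
  have hr0 : ∀ i, 0 < r i := fun i => norm_pos_iff.mpr (hsub i)
  have hr'0 : ∀ i, 0 < r' i := fun i => norm_pos_iff.mpr (hsub' i)
  set T : ℝ := ∑ i, (lam i)^2 / (r i * r' i) with hTdef
  have hT0 : 0 ≤ T := Finset.sum_nonneg fun i _ =>
    div_nonneg (sq_nonneg _) (mul_nonneg (hr0 i).le (hr'0 i).le)
  -- formulas for F l and F l'
  have hFl : F l = z + ((1/(n:ℝ) : ℝ) : ℂ) * ∑ i, (lam i : ℂ) * l / ((lam i : ℂ) - l) := by
    rw [hF]; exact fpc_key n hn A hH z hz l hl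
  have hFl' : F l' = z + ((1/(n:ℝ) : ℝ) : ℂ) * ∑ i, (lam i : ℂ) * l' / ((lam i : ℂ) - l') := by
    rw [hF]; exact fpc_key n hn A hH z hz l' hl'
  have hΔF : F l - F l' = ((1/(n:ℝ) : ℝ) : ℂ) *
      ∑ i, ((lam i:ℂ)*l/((lam i:ℂ)-l) - (lam i:ℂ)*l'/((lam i:ℂ)-l')) := by
    rw [hFl, hFl', Finset.sum_sub_distrib, mul_sub]
    ring
  -- bound on the absolute difference
  have habs : ‖F l - F l'‖ ≤ 1/(n:ℝ) * (‖l - l'‖ * T) := by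
    rw [hΔF, norm_mul, Complex.norm_real, Real.norm_eq_abs, abs_of_pos (by positivity)]
    apply mul_le_mul_of_nonneg_left _ (by positivity)
    calc ‖∑ i, ((lam i:ℂ)*l/((lam i:ℂ)-l) - (lam i:ℂ)*l'/((lam i:ℂ)-l'))‖
        ≤ ∑ i, ‖(lam i:ℂ)*l/((lam i:ℂ)-l) - (lam i:ℂ)*l'/((lam i:ℂ)-l')‖ :=
          norm_sum_le _ _
      _ = ∑ i, ‖l - l'‖ * ((lam i)^2 / (r i * r' i)) := by
          apply Finset.sum_congr rfl
          intro i _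
          rw [fpc_diff_term (lam i) l l' (hsub i) (hsub' i), norm_div, norm_mul, norm_mul,
            norm_pow, Complex.norm_real, Real.norm_eq_abs, abs_of_nonneg (hlam0 i)]
          rw [hrdef, hr'def]
          ring
      _ = ‖l - l'‖ * T := by rw [← Finset.mul_sum, hTdef]
  -- Cauchy-Schwarz
  have hSl : ∑ i, (lam i / r i)^2 = S l / l.im := by
    rw [hS]
    simp only
    rw [Finset.sum_div]
    apply Finset.sum_congr rfl
    intro i _
    rw [div_pow, hrdef]
    simp only
    rw [Complex.sq_norm]
    rw [eq_div_iff hlim.ne']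
    field_simp
  have hSl' : ∑ i, (lam i / r' i)^2 = S l' / l'.im := by
    rw [hS]
    simp only
    rw [Finset.sum_div]
    apply Finset.sum_congr rfl
    intro i _
    rw [div_pow, hr'def]
    simp only
    rw [Complex.sq_norm]
    rw [eq_div_iff hlim'.ne']
    field_simp
  have hCS : T ≤ Real.sqrt ((S l / l.im) * (S l' / l'.im)) := by
    have h := Finset.sum_mul_sq_le_sq_mul_sq Finset.univ
      (fun i => lam i / r i) (fun i => lam i / r' i)
    have hTform : T = ∑ i, (lam i / r i) * (lam i / r' i) := by
      rw [hTdef]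
      apply Finset.sum_congr rfl
      intro i _
      rw [div_mul_div_comm, ← sq]
    rw [hSl, hSl'] at h
    calc T = Real.sqrt (T^2) := (Real.sqrt_sq hT0).symm
      _ ≤ Real.sqrt ((S l / l.im) * (S l' / l'.im)) := by
          apply Real.sqrt_le_sqrt
          rw [hTform]
          exact h
  -- sqrt algebra
  have e1 : Real.sqrt l.im * Real.sqrt l'.im = Real.sqrt (l.im * l'.im) :=
    (Real.sqrt_mul hlim.le _).symm
  have e2 : Real.sqrt ((S l / l.im) * (S l' / l'.im)) * Real.sqrt (l.im * l'.im)
      = Real.sqrt (S l * S l') := by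
    rw [← Real.sqrt_mul (mul_nonneg (div_nonneg (hS0 l hlim) hlim.le)
      (div_nonneg (hS0 l' hlim') hlim'.le))]
    congr 1
    field_simp
  have e3 : 1/(n:ℝ) * Real.sqrt (S l * S l') = Real.sqrt (a * a') := by
    rw [hadef, ha'def,
      show 1/(n:ℝ) * S l * (1/(n:ℝ) * S l') = (1/(n:ℝ))^2 * (S l * S l') from by ring,
      Real.sqrt_mul (show (0:ℝ) ≤ (1/(n:ℝ))^2 by positivity) (S l * S l'),
      Real.sqrt_sq (by positivity)]
  -- main inequality, multiplied out
  have hX1 : ‖F l - F l'‖ * (Real.sqrt l.im * Real.sqrt l'.im)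
      ≤ ‖l - l'‖ * Real.sqrt (a * a') := by
    calc ‖F l - F l'‖ * (Real.sqrt l.im * Real.sqrt l'.im)
        ≤ (1/(n:ℝ) * (‖l - l'‖ * T)) * (Real.sqrt l.im * Real.sqrt l'.im) := by
          apply mul_le_mul_of_nonneg_right habs (by positivity)
      _ ≤ (1/(n:ℝ) * (‖l - l'‖ * Real.sqrt ((S l / l.im) * (S l' / l'.im))))
            * (Real.sqrt l.im * Real.sqrt l'.im) := by
          apply mul_le_mul_of_nonneg_right _ (by positivity)
          apply mul_le_mul_of_nonneg_left _ (by positivity)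
          exact mul_le_mul_of_nonneg_left hCS (norm_nonneg _)
      _ = ‖l - l'‖ *
            (1/(n:ℝ) * (Real.sqrt ((S l / l.im) * (S l' / l'.im)) * Real.sqrt (l.im * l'.im))) := by
          rw [e1]; ring
      _ = ‖l - l'‖ * Real.sqrt (a * a') := by rw [e2, e3]
  have hX2 : Real.sqrt (a * a') ≤ k * (Real.sqrt (F l).im * Real.sqrt (F l').im) := by
    have := fpc_scalar v K a a' hz hK0 ha0 ha'0 haK ha'K
    rw [hk]
    calc Real.sqrt (a * a') ≤ K/(1+K) * Real.sqrt ((v + a) * (v + a')) := this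
      _ = K/(1+K) * (Real.sqrt (F l).im * Real.sqrt (F l').im) := by
          rw [hFiml, hFiml', Real.sqrt_mul (by linarith)]
  -- conclusion
  have hp1 : 0 < Real.sqrt (F l).im * Real.sqrt (F l').im := by
    apply mul_pos <;> exact Real.sqrt_pos.mpr (by assumption)
  have hp2 : 0 < Real.sqrt l.im * Real.sqrt l'.im := by
    apply mul_pos <;> exact Real.sqrt_pos.mpr (by assumption)
  rw [dUpper, dUpper, mul_div_assoc' k, div_le_div_iff₀ hp1 hp2]
  calc ‖F l - F l'‖ * (Real.sqrt l.im * Real.sqrt l'.im)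
      ≤ ‖l - l'‖ * Real.sqrt (a * a') := hX1
    _ ≤ ‖l - l'‖ * (k * (Real.sqrt (F l).im * Real.sqrt (F l').im)) :=
        mul_le_mul_of_nonneg_left hX2 (norm_nonneg _)
    _ = k * ‖l - l'‖ * (Real.sqrt (F l).im * Real.sqrt (F l').im) := by ring
end

section
/- Let ℂ⁺ = {ω ∈ ℂ : Im(ω) > 0} and d(ω₁, ω₂) = |ω₁ − ω₂|/(Im(ω₁)^{1/2}·Im(ω₂)^{1/2}). Let f : ℂ⁺ → ℂ⁺ satisfy d(f(ω₁), f(ω₂)) ≤ k·d(ω₁, ω₂) for all ω₁, ω₂ ∈ ℂ⁺ and some k ≥ 0, let c ∈ ℂ⁺ be a fixed point of f (f(c) = c), let b ∈ ℂ⁺, and set Δ = d(b, f(b)). If k·(1 + Δ) < 1, then |c − b| ≤ |f(b) − b|/(1 − k·(1 + Δ)). -/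
/-- Stability of a fixed point for a `d`-contraction of the upper
half-plane: if `f` is `k`-Lipschitz for `d`, `c` is a fixed point, `b` is any point with
`Δ = d(b, f(b))` and `k·(1+Δ) < 1`, then `|c − b| ≤ |f(b) − b|/(1 − k·(1+Δ))`. -/
theorem fixed_point_stability
    (f : ℂ → ℂ) (hmaps : ∀ ω : ℂ, 0 < ω.im → 0 < (f ω).im)
    (k : ℝ) (hk : 0 ≤ k)
    (hlip : ∀ ω₁ ω₂ : ℂ, 0 < ω₁.im → 0 < ω₂.im →
      dUpper (f ω₁) (f ω₂) ≤ k * dUpper ω₁ ω₂)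
    (c : ℂ) (hc : 0 < c.im) (hfix : f c = c)
    (b : ℂ) (hb : 0 < b.im)
    (Δ : ℝ) (hΔ : Δ = dUpper b (f b))
    (hsmall : k * (1 + Δ) < 1) :
    ‖c - b‖ ≤ ‖f b - b‖ / (1 - k * (1 + Δ)) := by
  have hp : 0 < (f b).im := hmaps b hb
  have hscp : 0 < Real.sqrt c.im := Real.sqrt_pos.mpr hc
  have hs1p : 0 < Real.sqrt b.im := Real.sqrt_pos.mpr hb
  have hs2p : 0 < Real.sqrt (f b).im := Real.sqrt_pos.mpr hp
  have hΔ0 : 0 ≤ Δ := by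
    rw [hΔ]; unfold dUpper
    exact div_nonneg (norm_nonneg _) (by positivity)
  -- |f b - b| = Δ * (√b.im * √(f b).im)
  have hBeq : ‖f b - b‖ = Δ * (Real.sqrt b.im * Real.sqrt (f b).im) := by
    rw [hΔ]; unfold dUpper
    rw [norm_sub_rev (f b) b]
    field_simp
  -- Im growth bound
  have himle : (f b).im - b.im ≤ ‖f b - b‖ := by
    calc (f b).im - b.im = (f b - b).im := by simp [Complex.sub_im]
    _ ≤ |(f b - b).im| := le_abs_self _
    _ ≤ ‖f b - b‖ := Complex.abs_im_le_norm _
  have hsq1 : Real.sqrt b.im ^ 2 = b.im := Real.sq_sqrt hb.le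
  have hsq2 : Real.sqrt (f b).im ^ 2 = (f b).im := Real.sq_sqrt hp.le
  have h2 : Real.sqrt (f b).im ≤ (1 + Δ) * Real.sqrt b.im := by
    by_contra h
    push_neg at h
    nlinarith [mul_lt_mul_of_pos_right h hs2p, mul_lt_mul_of_pos_left h hs1p]
  -- Lipschitz at (c, b)
  have h1 := hlip c b hc hb
  rw [hfix] at h1
  unfold dUpper at h1
  rw [← mul_div_assoc, div_le_div_iff₀ (by positivity) (by positivity)] at h1
  -- h1 : |c - f b| * (√c.im * √b.im) ≤ k * |c - b| * (√c.im * √(f b).im)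
  have hC : ‖c - f b‖ ≤ k * (1 + Δ) * ‖c - b‖ := by
    nlinarith [mul_pos hscp hs1p,
      mul_le_mul_of_nonneg_left h2
        (mul_nonneg (mul_nonneg hk (norm_nonneg (c - b))) hscp.le)]
  have htri : ‖c - b‖ ≤ ‖c - f b‖ + ‖f b - b‖ := by
    have he : c - b = (c - f b) + (f b - b) := by ring
    rw [he]; exact norm_add_le _ _
  rw [le_div_iff₀ (by linarith)]
  nlinarith
end

section
/- Let p' ≤ p be positive integers, and let λ₁ ≤ λ₂ ≤ … ≤ λ_p and λ'₁ ≤ λ'₂ ≤ … ≤ λ'_{p'} be real numbers satisfying the interlacing relations λ_k ≤ λ'_k ≤ λ_{k+p−p'} for every k with 1 ≤ k ≤ p'. Then for every t ∈ ℝ, |(1/p)·#{k : 1 ≤ k ≤ p, λ_k ≤ t} − (1/p')·#{k : 1 ≤ k ≤ p', λ'_k ≤ t}| ≤ (p − p')/p. In particular, the Kolmogorov distance between the empirical distributions (1/p)·Σ_{k=1}^{p} δ_{λ_k} and (1/p')·Σ_{k=1}^{p'} δ_{λ'_k} is at most (p − p')/p. -/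
open MeasureTheory
open scoped ENNReal

lemma aux_real_interlace (P P' A B : ℝ) (hP' : 0 < P') (hle : P' ≤ P)
    (h1 : B ≤ A) (h2 : A ≤ B + (P - P')) (hB : B ≤ P') (hB0 : 0 ≤ B) :
    |1 / P * A - 1 / P' * B| ≤ (P - P') / P := by
  have hP : 0 < P := lt_of_lt_of_le hP' hle
  set x := 1 / P with hx
  set y := 1 / P' with hy
  have hxP : x * P = 1 := by rw [hx, one_div, inv_mul_cancel₀ hP.ne']
  have hyP : y * P' = 1 := by rw [hy, one_div, inv_mul_cancel₀ hP'.ne']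
  have hx0 : 0 ≤ x := by positivity
  have hxy : x ≤ y := by
    rw [hx, hy]; exact one_div_le_one_div_of_le hP' hle
  have hgoal : (P - P') / P = (P - P') * x := by rw [hx]; ring
  rw [hgoal, abs_sub_le_iff]
  constructor
  · have t1 : x * A ≤ x * (B + (P - P')) := mul_le_mul_of_nonneg_left h2 hx0
    have t2 : x * B ≤ y * B := mul_le_mul_of_nonneg_right hxy hB0
    nlinarith
  · have t1 : B * (y - x) ≤ P' * (y - x) := mul_le_mul_of_nonneg_right hB (by linarith)
    nlinarith

lemma aux_meas_interlace (n : ℕ) (f : Fin n → ℝ) (t : ℝ) :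
    (((n : ℝ≥0∞)⁻¹ • ∑ k, (Measure.dirac (f k) : Measure ℝ)) (Set.Iic t)).toReal
      = 1/(n:ℝ) * ((Finset.univ.filter fun k => f k ≤ t).card : ℝ) := by
  rw [Measure.smul_apply, Measure.finset_sum_apply]
  simp only [Measure.dirac_apply' _ measurableSet_Iic, Set.indicator_apply, Set.mem_Iic,
    Pi.one_apply]
  rw [Finset.sum_boole]
  rw [smul_eq_mul, ENNReal.toReal_mul, ENNReal.toReal_inv]
  simp [one_div]

/-- If the ordered families `λ` (of size `p`) and `λ'` (of size `p' ≤ p`)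
satisfy the interlacing relations `λ_k ≤ λ'_k ≤ λ_{k+p−p'}`, then the CDFs of their
empirical distributions differ by at most `(p − p')/p` everywhere; in particular the
Kolmogorov distance of the empirical distributions is at most `(p − p')/p`. -/
theorem kolmogorov_distance_of_interlacing
    (p p' : ℕ) (hp' : 0 < p') (hpp' : p' ≤ p)
    (lam : Fin p → ℝ) (lam' : Fin p' → ℝ)
    (hmono : Monotone lam) (hmono' : Monotone lam')
    (hinter : ∀ k : Fin p',
      lam (Fin.castLE hpp' k) ≤ lam' k ∧
      lam' k ≤ lam ⟨k.val + (p - p'), by have := k.isLt; omega⟩) :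
    (∀ t : ℝ,
      |(1 / (p : ℝ)) * ((Finset.univ.filter fun k : Fin p => lam k ≤ t).card : ℝ) -
        (1 / (p' : ℝ)) * ((Finset.univ.filter fun k : Fin p' => lam' k ≤ t).card : ℝ)| ≤
        ((p : ℝ) - (p' : ℝ)) / p) ∧
    (⨆ t : ℝ,
      |(((p : ℝ≥0∞)⁻¹ • ∑ k : Fin p, (Measure.dirac (lam k) : Measure ℝ)) (Set.Iic t)).toReal -
        (((p' : ℝ≥0∞)⁻¹ • ∑ k : Fin p', (Measure.dirac (lam' k) : Measure ℝ)) (Set.Iic t)).toReal|) ≤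
      ((p : ℝ) - (p' : ℝ)) / p := by
  have hp : 0 < p := lt_of_lt_of_le hp' hpp'
  have key : ∀ t : ℝ,
      |(1 / (p : ℝ)) * ((Finset.univ.filter fun k : Fin p => lam k ≤ t).card : ℝ) -
        (1 / (p' : ℝ)) * ((Finset.univ.filter fun k : Fin p' => lam' k ≤ t).card : ℝ)| ≤
        ((p : ℝ) - (p' : ℝ)) / p := by
    intro t
    classical
    set F := Finset.univ.filter fun k : Fin p => lam k ≤ t with hF
    set F' := Finset.univ.filter fun k : Fin p' => lam' k ≤ t with hF'
    have hc1 : F'.card ≤ F.card := by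
      apply Finset.card_le_card_of_injOn (fun k => Fin.castLE hpp' k)
      · intro k hk
        simp only [hF, hF', Finset.mem_coe, Finset.mem_filter, Finset.mem_univ, true_and] at hk ⊢
        exact le_trans (hinter k).1 hk
      · intro a _ b _ h
        exact Fin.castLE_injective hpp' h
    have hc2 : F.card ≤ F'.card + (p - p') := by
      have hsplit := Finset.card_filter_add_card_filter_not
        (s := F) (p := fun j => j.val < p - p')
      have hA : (F.filter fun j => j.val < p - p').card ≤ p - p' := by
        have h := Finset.card_le_card_of_injOn (fun j : Fin p => j.val)
          (s := F.filter fun j => j.val < p - p') (t := Finset.range (p - p'))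
          (by intro j hj
              simp only [Finset.mem_coe, Finset.mem_filter, Finset.mem_range] at hj ⊢
              exact hj.2)
          (by intro a _ b _ h; exact Fin.val_injective h)
        simpa using h
      have hB : (F.filter fun j => ¬ j.val < p - p').card ≤ F'.card := by
        apply Finset.card_le_card_of_injOn
          (fun j : Fin p => (⟨j.val - (p - p'), by have := j.isLt; omega⟩ : Fin p'))
        · intro j hj
          simp only [hF, hF', Finset.mem_coe, Finset.mem_filter, Finset.mem_univ, true_and, not_lt] at hj ⊢
          obtain ⟨hjt, hjd⟩ := hj
          set k : Fin p' := ⟨j.val - (p - p'), by have := j.isLt; omega⟩ with hk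
          have heq : (⟨k.val + (p - p'), by have := k.isLt; omega⟩ : Fin p) = j :=
            Fin.ext (by simp [hk]; omega)
          have := (hinter k).2
          rw [heq] at this
          exact le_trans this hjt
        · intro a ha b hb h
          have ha2 : p - p' ≤ a.val := not_lt.mp (Finset.mem_filter.mp ha).2
          have hb2 : p - p' ≤ b.val := not_lt.mp (Finset.mem_filter.mp hb).2
          have hab : a.val - (p - p') = b.val - (p - p') := congrArg Fin.val h
          exact Fin.ext (by omega)
      omega
    have hB' : F'.card ≤ p' := by
      simpa using Finset.card_filter_le Finset.univ (fun k : Fin p' => lam' k ≤ t)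
    apply aux_real_interlace _ _ _ _ (by exact_mod_cast hp') (by exact_mod_cast hpp')
      (by exact_mod_cast hc1)
      (by push_cast [← Nat.cast_sub hpp']; exact_mod_cast hc2)
      (by exact_mod_cast hB') (by positivity)
  refine ⟨key, ?_⟩
  apply Real.iSup_le
  · intro t
    rw [aux_meas_interlace p lam t, aux_meas_interlace p' lam' t]
    exact key t
  · apply div_nonneg _ (by positivity)
    have : (p' : ℝ) ≤ p := by exact_mod_cast hpp'
    linarith
end
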